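/- arXiv:2112.03217 — 5 statements merged into one kernel-verified Lean document; each statement's English description precedes it below -/
import Mathlib

section
/- Let d ≥ 1 and fix δ ∈ (0, 3). Then there exist constants c > 0 and b_0 > 0, depending only on d and δ, such that for all b ∈ (0, b_0) and all s ∈ [1/(4d), 3/(4d)]^d, the Dirichlet density evaluated at the shifted point satisfies K_{s/b + 1, (1−‖s‖₁)/b + 1}(s + δ b^{1/2} · 1) ≥ c · b^{−d/2}, where s + δ b^{1/2} · 1 denotes adding δ b^{1/2} to every coordinate of s. -/
open MeasureTheory Filter Topology
open scoped ENNReal BigOperators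

noncomputable section

/-- The d-dimensional simplex `S_d = {s ∈ [0,1]^d : s_1 + ⋯ + s_d ≤ 1}`. -/
def Sd (d : ℕ) : Set (Fin d → ℝ) :=
  {s | (∀ i, 0 ≤ s i ∧ s i ≤ 1) ∧ ∑ i, s i ≤ 1}

/-- The Dirichlet density `K_{u,v}` on `S_d` (0 outside). -/
def dirK (d : ℕ) (u : Fin d → ℝ) (v : ℝ) : (Fin d → ℝ) → ℝ :=
  Set.indicator (Sd d)
    (fun s => Real.Gamma (v + ∑ i, u i) / (Real.Gamma v * ∏ i, Real.Gamma (u i)) *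
      (1 - ∑ i, s i) ^ (v - 1) * ∏ i, (s i) ^ (u i - 1))

/-- The Dirichlet kernel `K_{s/b+1, (1-‖s‖₁)/b+1}` at location `s` with bandwidth `b`. -/
def dirKb (d : ℕ) (b : ℝ) (s : Fin d → ℝ) : (Fin d → ℝ) → ℝ :=
  dirK d (fun i => s i / b + 1) ((1 - ∑ i, s i) / b + 1)

/-- The Dirichlet kernel density estimator based on the sample `X`. -/
def fhat (d n : ℕ) (b : ℝ) (X : Fin n → Fin d → ℝ) (s : Fin d → ℝ) : ℝ :=
  (n : ℝ)⁻¹ * ∑ i, dirKb d b s (X i)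

/-- `m` = the largest integer strictly less than `β` (for `β > 0`). -/
def mOf (β : ℝ) : ℕ := ⌈β⌉₊ - 1

/-- Partial derivative of order `j` in the directions `v` (on the interior of the simplex). -/
def Dpartial (d j : ℕ) (f : (Fin d → ℝ) → ℝ) (v : Fin j → Fin d) (s : Fin d → ℝ) : ℝ :=
  iteratedFDerivWithin ℝ j f (interior (Sd d)) s fun i => Pi.single (v i) 1

/-- The Hölder class `Σ(d, β, L)` of probability densities supported on `S_d`. -/
def holderClass (d : ℕ) (β L : ℝ) : Set ((Fin d → ℝ) → ℝ) :=
  {f | (∀ s, 0 ≤ f s) ∧ (∀ s, s ∉ Sd d → f s = 0) ∧ (∫ s in Sd d, f s) = 1 ∧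
    ContDiffOn ℝ (mOf β) f (interior (Sd d)) ∧
    ∀ v : Fin (mOf β) → Fin d, ∀ s ∈ interior (Sd d), ∀ t ∈ interior (Sd d),
      |Dpartial d (mOf β) f v s - Dpartial d (mOf β) f v t| ≤
        L * (∑ i, |s i - t i|) ^ (β - (mOf β : ℝ))}

/-- `E_f ‖f̂_{n,b} − f‖_p^p`: expectation, under i.i.d. sampling of `X_1, …, X_n` from the
density `f`, of the `p`-th power of the `L^p` distance between `f̂_{n,b}` and `f` on `S_d`. -/
def lpRiskPow (d n : ℕ) (b p : ℝ) (f : (Fin d → ℝ) → ℝ) : ℝ :=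
  ∫ ω : Fin n → Fin d → ℝ,
    (∏ i, f (ω i)) * ∫ s in Sd d, |fhat d n b ω s - f s| ^ p

/-
In barycentric coordinates p = (1 - ‖s‖₁, s) and q = (1 - ‖t‖₁, t) of s and of the shifted
point t, the kernel equals Γ(1/b + d + 1) ∏ⱼ q_j^{p_j/b} / Γ(p_j/b + 1). Two-sided Stirling
bounds for Γ(x + 1), x ≥ 1 (Stirling for factorials, interpolated by log-convexity of Γ), bound
this below by 6^{-(d+1)} b^{-d/2} exp(-KL(p ‖ q)/b). Since q - p = δ√b (-d, 1, …, 1) and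
q ≥ p/2, KL(p ‖ q) ≤ 2 χ²(q ‖ p) ≤ 16 d² δ² b, so the exponential factor is bounded below.
-/

open Real Finset
open scoped Nat

lemma mul_log_sub_le_mul_log_sub {x c : ℝ} (hx : 0 < x) (hc : 0 < c) :
    x * log c - c ≤ x * log x - x := by
  have h := mul_le_mul_of_nonneg_left (log_le_sub_one_of_pos (div_pos hc hx)) hx.le
  rw [log_div hc.ne' hx.ne', mul_sub_one, mul_div_cancel₀ _ hx.ne'] at h
  linarith

lemma rpow_le_two_mul_rpow {a c θ : ℝ} (hc₀ : 0 ≤ c) (hc : c ≤ 2 * a) (hθ₀ : 0 ≤ θ)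
    (hθ₁ : θ ≤ 1) : c ^ θ ≤ 2 * a ^ θ := by
  have ha : 0 ≤ a := by linarith
  calc c ^ θ ≤ (2 * a) ^ θ := rpow_le_rpow hc₀ hc hθ₀
    _ = 2 ^ θ * a ^ θ := mul_rpow zero_le_two ha
    _ ≤ 2 * a ^ θ := by
      gcongr
      simpa using rpow_le_rpow_of_exponent_le one_le_two hθ₁

lemma Real.Gamma_add_le_Gamma_mul_rpow {x θ : ℝ} (hx : 0 < x) (hθ₀ : 0 ≤ θ) (hθ₁ : θ ≤ 1) :
    Gamma (x + θ) ≤ Gamma x * x ^ θ := by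
  have hconv := convexOn_log_Gamma.2 (Set.mem_Ioi.2 hx) (Set.mem_Ioi.2 (by linarith : 0 < x + 1))
    (sub_nonneg.2 hθ₁) hθ₀ (by ring)
  simp only [smul_eq_mul, Function.comp_apply, Gamma_add_one hx.ne'] at hconv
  rw [show (1 - θ) * x + θ * (x + 1) = x + θ by ring,
    log_mul hx.ne' (Gamma_pos_of_pos hx).ne'] at hconv
  rw [← log_le_log_iff (Gamma_pos_of_pos (by linarith)) (by positivity),
    log_mul (Gamma_pos_of_pos hx).ne' (rpow_pos_of_pos hx θ).ne', log_rpow hx]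
  linarith

lemma Real.pow_mul_Gamma_le_Gamma_add_nat {x : ℝ} (hx : 0 < x) (k : ℕ) :
    x ^ k * Gamma x ≤ Gamma (x + k) := by
  induction k with
  | zero => simp
  | succ k ih =>
    rw [Nat.cast_succ, ← add_assoc, Gamma_add_one (by positivity), pow_succ', mul_assoc]
    exact mul_le_mul (by linarith [k.cast_nonneg (α := ℝ)]) ih (by positivity) (by positivity)

lemma natCast_div_exp_one_pow {n : ℕ} (hn : n ≠ 0) :
    ((n : ℝ) / exp 1) ^ n = exp (n * log n - n) := by
  have hn' : (0 : ℝ) < n := by positivity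
  rw [← exp_log (by positivity : (0 : ℝ) < (n / exp 1) ^ n), log_pow,
    log_div hn'.ne' (exp_ne_zero 1), log_exp]
  ring_nf

lemma factorial_le_exp_one_mul_sqrt_mul_exp {n : ℕ} (hn : n ≠ 0) :
    (n ! : ℝ) ≤ exp 1 * (√n * exp (n * log n - n)) := by
  have hseq : Stirling.stirlingSeq n ≤ exp 1 / √2 := by
    obtain ⟨m, rfl⟩ := Nat.exists_eq_succ_of_ne_zero hn
    simpa [Stirling.stirlingSeq_one] using Stirling.stirlingSeq'_antitone (Nat.zero_le m)
  rw [Stirling.stirlingSeq, div_le_div_iff₀ (by positivity) (by positivity), sqrt_mul zero_le_two,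
    natCast_div_exp_one_pow hn] at hseq
  have h2 : (0 : ℝ) < √2 := by positivity
  nlinarith

lemma Real.Gamma_add_one_le_six_mul_sqrt_mul_exp {x : ℝ} (hx : 1 ≤ x) :
    Gamma (x + 1) ≤ 6 * (√x * exp (x * log x - x)) := by
  set n := ⌊x⌋₊
  have hn : n ≠ 0 := (Nat.floor_pos.2 hx).ne'
  have hn₁ : (1 : ℝ) ≤ n := Nat.one_le_cast.2 (Nat.pos_of_ne_zero hn)
  have hn₀ : (0 : ℝ) < n := by positivity
  have hnx : (n : ℝ) ≤ x := Nat.floor_le (by linarith)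
  have hxn : x < n + 1 := Nat.lt_floor_add_one x
  have hΓ : Gamma (x + 1) ≤ n ! * ((n : ℝ) + 1) ^ (x - n) := by
    have h := Gamma_add_le_Gamma_mul_rpow (x := n + 1) (by positivity) (sub_nonneg.2 hnx)
      (by linarith)
    rwa [show (n : ℝ) + 1 + (x - n) = x + 1 by ring, Gamma_nat_eq_factorial] at h
  have hpow : ((n : ℝ) + 1) ^ (x - n) ≤ 2 * exp ((x - n) * log n) := by
    rw [mul_comm _ (log _), ← rpow_def_of_pos hn₀]
    exact rpow_le_two_mul_rpow (by positivity) (by linarith) (sub_nonneg.2 hnx) (by linarith)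
  have htangent := mul_log_sub_le_mul_log_sub (by linarith) hn₀ (x := x)
  calc Gamma (x + 1) ≤ n ! * ((n : ℝ) + 1) ^ (x - n) := hΓ
    _ ≤ exp 1 * (√n * exp (n * log n - n)) * (2 * exp ((x - n) * log n)) :=
      mul_le_mul (factorial_le_exp_one_mul_sqrt_mul_exp hn) hpow (by positivity) (by positivity)
    _ = 2 * exp 1 * √n * exp (x * log n - n) := by
      rw [show x * log n - n = (n * log n - n) + (x - n) * log n by ring, exp_add]; ring
    _ ≤ 2 * exp 1 * √x * exp (x * log x - x) := by gcongr
    _ ≤ 6 * (√x * exp (x * log x - x)) := by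
      rw [← mul_assoc]; gcongr; linarith [exp_one_lt_d9]

lemma Real.sqrt_mul_exp_le_Gamma_add_one {x : ℝ} (hx : 1 ≤ x) :
    √x * exp (x * log x - x) ≤ Gamma (x + 1) := by
  set n := ⌊x⌋₊
  have hx₀ : 0 < x := by linarith
  have hnx : (n : ℝ) ≤ x := Nat.floor_le hx₀.le
  have hxn : x < n + 1 := Nat.lt_floor_add_one x
  have hΓ : ((n + 1) ! : ℝ) ≤ Gamma (x + 1) * (x + 1) ^ (n + 1 - x) := by
    have h := Gamma_add_le_Gamma_mul_rpow (x := x + 1) (θ := n + 1 - x) (by positivity)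
      (by linarith) (by linarith)
    rwa [show x + 1 + (n + 1 - x) = ((n + 1 : ℕ) : ℝ) + 1 by push_cast; ring,
      Gamma_nat_eq_factorial] at h
  have hstirling := Stirling.le_factorial_stirling (n + 1)
  rw [natCast_div_exp_one_pow n.succ_ne_zero] at hstirling
  have hpow : (x + 1) ^ (n + 1 - x) ≤ 2 * exp ((n + 1 - x) * log x) := by
    rw [mul_comm _ (log _), ← rpow_def_of_pos hx₀]
    exact rpow_le_two_mul_rpow (by positivity) (by linarith) (by linarith) (by linarith)
  have htangent := mul_log_sub_le_mul_log_sub (by positivity : (0 : ℝ) < n + 1) hx₀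
  have hsqrt : 2 * √x ≤ √(2 * π * ((n + 1 : ℕ) : ℝ)) := by
    rw [show 2 * √x = √(4 * x) by rw [sqrt_mul zero_le_four, show (4 : ℝ) = 2 ^ 2 by norm_num,
      sqrt_sq zero_le_two]]
    push_cast
    exact sqrt_le_sqrt (by nlinarith [pi_gt_three])
  have key : √x * exp (x * log x - x) * (2 * exp ((n + 1 - x) * log x)) ≤
      Gamma (x + 1) * (2 * exp ((n + 1 - x) * log x)) := calc
    _ = 2 * √x * exp ((n + 1) * log x - x) := by
      rw [show (n + 1) * log x - x = (x * log x - x) + (n + 1 - x) * log x by ring, exp_add]; ring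
    _ ≤ √(2 * π * ((n + 1 : ℕ) : ℝ)) * exp (((n + 1 : ℕ) : ℝ) * log ((n + 1 : ℕ) : ℝ) -
        ((n + 1 : ℕ) : ℝ)) := by
      push_cast at hsqrt ⊢
      gcongr
    _ ≤ Gamma (x + 1) * (2 * exp ((n + 1 - x) * log x)) :=
      hstirling.trans (hΓ.trans (by gcongr))
  exact le_of_mul_le_mul_right key (by positivity)

lemma Real.pow_mul_sqrt_mul_exp_le_Gamma_add_one_add_nat {x : ℝ} (hx : 1 ≤ x) (k : ℕ) :
    x ^ k * (√x * exp (x * log x - x)) ≤ Gamma (x + 1 + k) := calc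
  _ ≤ (x + 1) ^ k * Gamma (x + 1) := by
    gcongr
    · linarith
    · exact sqrt_mul_exp_le_Gamma_add_one hx
  _ ≤ Gamma (x + 1 + k) := pow_mul_Gamma_le_Gamma_add_nat (by positivity) k

def dirichletPDF {ι : Type*} [Fintype ι] (α x : ι → ℝ) : ℝ :=
  Gamma (∑ j, α j) / (∏ j, Gamma (α j)) * ∏ j, x j ^ (α j - 1)

lemma exp_div_le_rpow_div_Gamma {b p q : ℝ} (hb : 0 < b) (hbp : b ≤ p) (hp : p ≤ 1)
    (hq : 0 < q) :
    exp (p / b * (log (q / p) + 1 + log b)) / (6 * √b⁻¹) ≤ q ^ (p / b) / Gamma (p / b + 1) := by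
  have hp₀ : 0 < p := hb.trans_le hbp
  have hx : 1 ≤ p / b := (one_le_div hb).2 hbp
  have hΓ : Gamma (p / b + 1) ≤ 6 * √b⁻¹ * exp (p / b * log (p / b) - p / b) := by
    refine (Gamma_add_one_le_six_mul_sqrt_mul_exp hx).trans ?_
    rw [← mul_assoc]
    gcongr
    rw [div_eq_mul_inv]
    exact mul_le_of_le_one_left (by positivity) hp
  have hexp : exp (p / b * (log (q / p) + 1 + log b)) =
      q ^ (p / b) / exp (p / b * log (p / b) - p / b) := by
    rw [rpow_def_of_pos hq, ← exp_sub, log_div hq.ne' hp₀.ne', log_div hp₀.ne' hb.ne']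
    ring_nf
  calc exp (p / b * (log (q / p) + 1 + log b)) / (6 * √b⁻¹)
      = q ^ (p / b) / (6 * √b⁻¹ * exp (p / b * log (p / b) - p / b)) := by
        rw [hexp, div_div, mul_comm (exp _)]
    _ ≤ q ^ (p / b) / Gamma (p / b + 1) :=
      div_le_div_of_nonneg_left (by positivity) (Gamma_pos_of_pos (by positivity)) hΓ

theorem le_dirichletPDF {d : ℕ} {b : ℝ} {p q : Fin (d + 1) → ℝ} (hb : 0 < b)
    (hbp : ∀ j, b ≤ p j) (hp : ∑ j, p j = 1) (hq : ∀ j, 0 < q j) :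
    (6 ^ (d + 1))⁻¹ * b ^ (-(d : ℝ) / 2) * exp ((∑ j, p j * log (q j / p j)) / b) ≤
      dirichletPDF (fun j ↦ p j / b + 1) q := by
  have hp₀ : ∀ j, 0 ≤ p j := fun j ↦ hb.le.trans (hbp j)
  have hp₁ : ∀ j, p j ≤ 1 := fun j ↦ hp ▸ single_le_sum (fun i _ ↦ hp₀ i) (mem_univ j)
  have hN : 1 ≤ b⁻¹ := one_le_inv_iff₀.2 ⟨hb, (hbp 0).trans (hp₁ 0)⟩
  have hsum : ∑ j, (p j / b + 1) = b⁻¹ + 1 + d := by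
    rw [sum_add_distrib, ← sum_div, hp]; simp; ring
  have hden : exp (∑ j, p j / b * (log (q j / p j) + 1 + log b)) / (6 * √b⁻¹) ^ (d + 1) ≤
      ∏ j, q j ^ (p j / b) / Gamma (p j / b + 1) := by
    rw [exp_sum, ← Fin.prod_const (d + 1) (6 * √b⁻¹), ← prod_div_distrib]
    exact prod_le_prod (fun j _ ↦ by positivity)
      (fun j _ ↦ exp_div_le_rpow_div_Gamma hb (hbp j) (hp₁ j) (hq j))
  have hexp : b⁻¹ * log b⁻¹ - b⁻¹ + ∑ j, p j / b * (log (q j / p j) + 1 + log b) =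
      (∑ j, p j * log (q j / p j)) / b := by
    simp only [mul_add, sum_add_distrib, ← sum_mul, ← sum_div, hp, log_inv]
    rw [sum_div]
    field_simp
    ring
  have hpow : b ^ (-(d : ℝ) / 2) = √b⁻¹ ^ d := by
    rw [sqrt_eq_rpow, ← rpow_natCast, ← rpow_mul (by positivity), inv_rpow hb.le,
      ← rpow_neg hb.le]
    ring_nf
  have hsq : b⁻¹ ^ d = √b⁻¹ ^ d * √b⁻¹ ^ d := by rw [← mul_pow, mul_self_sqrt (by positivity)]
  unfold dirichletPDF
  simp only [add_sub_cancel_right]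
  rw [hsum, mul_comm_div, ← prod_div_distrib]
  calc (6 ^ (d + 1))⁻¹ * b ^ (-(d : ℝ) / 2) * exp ((∑ j, p j * log (q j / p j)) / b)
      = b⁻¹ ^ d * (√b⁻¹ * exp (b⁻¹ * log b⁻¹ - b⁻¹)) *
        (exp (∑ j, p j / b * (log (q j / p j) + 1 + log b)) / (6 * √b⁻¹) ^ (d + 1)) := by
        rw [hpow, ← hexp, exp_add, hsq]
        field_simp
        ring
    _ ≤ _ := mul_le_mul (pow_mul_sqrt_mul_exp_le_Gamma_add_one_add_nat hN d) hden (by positivity) (Gamma_pos_of_pos (by positivity)).le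

lemma sub_sub_two_mul_sq_div_le_mul_log_div {p q : ℝ} (hp : 0 < p) (hpq : p ≤ 2 * q) :
    q - p - 2 * (q - p) ^ 2 / p ≤ p * log (q / p) := by
  have hq : 0 < q := by linarith
  have hgap : p * (1 - (q / p)⁻¹) - (q - p - 2 * (q - p) ^ 2 / p) =
      (q - p) ^ 2 * (2 * q - p) / (p * q) := by
    field_simp
    ring
  have hlog := mul_le_mul_of_nonneg_left (one_sub_inv_le_log_of_pos (div_pos hq hp)) hp.le
  have : 0 ≤ (q - p) ^ 2 * (2 * q - p) / (p * q) := by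
    have : 0 ≤ 2 * q - p := by linarith
    positivity
  linarith

theorem neg_two_mul_sum_sq_div_le_sum_mul_log_div {ι : Type*} [Fintype ι] {p q : ι → ℝ}
    (hp : ∀ j, 0 < p j) (hpq : ∀ j, p j ≤ 2 * q j) (hsum : ∑ j, q j = ∑ j, p j) :
    -2 * ∑ j, (q j - p j) ^ 2 / p j ≤ ∑ j, p j * log (q j / p j) := by
  have hlin : ∑ j, (q j - p j - 2 * (q j - p j) ^ 2 / p j) =
      -2 * ∑ j, (q j - p j) ^ 2 / p j := by
    rw [sum_sub_distrib, sum_sub_distrib, hsum]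
    simp only [mul_div_assoc, ← mul_sum]
    ring
  rw [← hlin]
  exact sum_le_sum fun j _ ↦ sub_sub_two_mul_sq_div_le_mul_log_div (hp j) (hpq j)

def barycentric {d : ℕ} (s : Fin d → ℝ) : Fin (d + 1) → ℝ :=
  Fin.cons (1 - ∑ i, s i) s

lemma sum_barycentric {d : ℕ} (s : Fin d → ℝ) : ∑ j, barycentric s j = 1 := by
  simp [barycentric, Fin.sum_univ_succ]

lemma mem_Sd_of_nonneg_of_sum_le_one {d : ℕ} {t : Fin d → ℝ} (ht : ∀ i, 0 ≤ t i)
    (hsum : ∑ i, t i ≤ 1) : t ∈ Sd d :=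
  ⟨fun i ↦ ⟨ht i, (single_le_sum (fun j _ ↦ ht j) (mem_univ i)).trans hsum⟩, hsum⟩

lemma dirKb_eq_dirichletPDF {d : ℕ} {b : ℝ} {s t : Fin d → ℝ} (ht : t ∈ Sd d) :
    dirKb d b s t = dirichletPDF (fun j ↦ barycentric s j / b + 1) (barycentric t) := by
  simp only [dirKb, dirK, dirichletPDF, barycentric, Set.indicator_of_mem ht,
    Fin.sum_univ_succ, Fin.prod_univ_succ, Fin.cons_zero, Fin.cons_succ]
  ring_nf

lemma sum_add_const {d : ℕ} (s : Fin d → ℝ) (ε : ℝ) : ∑ i, (s i + ε) = ∑ i, s i + d * ε := by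
  simp [sum_add_distrib]

section ShiftedPoint

variable {d : ℕ} {s : Fin d → ℝ} {ε : ℝ}

lemma sum_le_three_quarters (hs : ∀ i, s i ∈ Set.Icc (1 / (4 * (d : ℝ))) (3 / (4 * (d : ℝ)))) :
    ∑ i, s i ≤ 3 / 4 := by
  calc ∑ i, s i ≤ d * (3 / (4 * d)) := by
        simpa using sum_le_card_nsmul univ s _ fun i _ ↦ (hs i).2
    _ = 3 / 4 * (d / d) := by ring
    _ ≤ 3 / 4 := mul_le_of_le_one_right (by norm_num) (div_self_le_one (d : ℝ))

lemma le_barycentric {b : ℝ} (hd : 1 ≤ d)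
    (hs : ∀ i, s i ∈ Set.Icc (1 / (4 * (d : ℝ))) (3 / (4 * (d : ℝ)))) (hb : b ≤ 1 / (4 * d))
    (j : Fin (d + 1)) : b ≤ barycentric s j := by
  refine Fin.cases ?_ (fun i ↦ ?_) j
  · have h4d : 1 / (4 * (d : ℝ)) ≤ 1 / 4 :=
      one_div_le_one_div_of_le (by norm_num) (by linarith [(Nat.one_le_cast (α := ℝ)).2 hd])
    simp only [barycentric, Fin.cons_zero]
    linarith [sum_le_three_quarters hs]
  · simpa [barycentric] using hb.trans (hs i).1

lemma barycentric_le_two_mul_barycentric_shift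
    (hs : ∀ i, s i ∈ Set.Icc (1 / (4 * (d : ℝ))) (3 / (4 * (d : ℝ)))) (hε : 0 ≤ ε)
    (hdε : d * ε ≤ 1 / 8) (j : Fin (d + 1)) :
    barycentric s j ≤ 2 * barycentric (fun i ↦ s i + ε) j := by
  refine Fin.cases ?_ (fun i ↦ ?_) j
  · simp only [barycentric, Fin.cons_zero, sum_add_const]
    linarith [sum_le_three_quarters hs]
  · have : 0 ≤ s i := le_trans (by positivity) (hs i).1
    simp only [barycentric, Fin.cons_succ]
    linarith

lemma sum_sq_div_barycentric_shift_le (hd : 1 ≤ d)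
    (hs : ∀ i, s i ∈ Set.Icc (1 / (4 * (d : ℝ))) (3 / (4 * (d : ℝ)))) :
    ∑ j, (barycentric (fun i ↦ s i + ε) j - barycentric s j) ^ 2 / barycentric s j ≤
      8 * d ^ 2 * ε ^ 2 := by
  have hd₀ : (0 : ℝ) < d := by exact_mod_cast hd
  have hfirst : (d * ε) ^ 2 / (1 - ∑ i, s i) ≤ 4 * d ^ 2 * ε ^ 2 := by
    rw [div_le_iff₀ (by linarith [sum_le_three_quarters hs])]
    nlinarith [sum_le_three_quarters hs, sq_nonneg (d * ε)]
  have hrest (i : Fin d) : ε ^ 2 / s i ≤ 4 * d * ε ^ 2 := by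
    have h := (div_le_iff₀ (by positivity)).1 (hs i).1
    rw [div_le_iff₀ (by nlinarith)]
    nlinarith [sq_nonneg ε]
  simp only [barycentric, Fin.sum_univ_succ, Fin.cons_zero, Fin.cons_succ, sum_add_const]
  calc (1 - (∑ i, s i + d * ε) - (1 - ∑ i, s i)) ^ 2 / (1 - ∑ i, s i) +
        ∑ i, (s i + ε - s i) ^ 2 / s i
      = (d * ε) ^ 2 / (1 - ∑ i, s i) + ∑ i, ε ^ 2 / s i := by ring_nf
    _ ≤ 4 * d ^ 2 * ε ^ 2 + ∑ _i : Fin d, 4 * d * ε ^ 2 :=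
      add_le_add hfirst (sum_le_sum fun i _ ↦ hrest i)
    _ = 8 * d ^ 2 * ε ^ 2 := by simp; ring

end ShiftedPoint

/-- Lemma 3.4: for fixed `δ ∈ (0,3)` there are `c, b_0 > 0` depending
only on `d` and `δ` such that for all `b ∈ (0,b_0)` and `s ∈ [1/(4d), 3/(4d)]^d`,
`K_{s/b+1,(1-‖s‖₁)/b+1}(s + δ√b ⋅ 1) ≥ c b^{-d/2}`. -/
theorem dirichlet_kernel_shifted_lower_bound (d : ℕ) (hd : 1 ≤ d) (δ : ℝ)
    (hδ : δ ∈ Set.Ioo (0 : ℝ) 3) :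
    ∃ c b0 : ℝ, 0 < c ∧ 0 < b0 ∧ ∀ b ∈ Set.Ioo (0 : ℝ) b0,
      ∀ s : Fin d → ℝ,
        (∀ i, s i ∈ Set.Icc (1 / (4 * (d : ℝ))) (3 / (4 * (d : ℝ)))) →
        c * b ^ (-(d : ℝ) / 2) ≤ dirKb d b s (fun i => s i + δ * Real.sqrt b) := by
  obtain ⟨hδ₀, hδ₃⟩ := hδ
  have hd₀ : (1 : ℝ) ≤ d := by exact_mod_cast hd
  refine ⟨(6 ^ (d + 1))⁻¹ * exp (-16 * d ^ 2 * δ ^ 2), 1 / (576 * d ^ 2), by positivity,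
    by positivity, ?_⟩
  rintro b ⟨hb, hbb₀⟩ s hs
  set ε := δ * √b
  have hε : 0 ≤ ε := by positivity
  have hε_sq : ε ^ 2 = δ ^ 2 * b := by rw [mul_pow, sq_sqrt hb.le]
  have hdε : d * ε ≤ 1 / 8 := by
    have : 576 * d ^ 2 * b < 1 := by rwa [lt_div_iff₀' (by positivity)] at hbb₀
    nlinarith [mul_nonneg (by linarith : (0 : ℝ) ≤ d) hε]
  have hb4d : b ≤ 1 / (4 * d) :=
    hbb₀.le.trans (one_div_le_one_div_of_le (by positivity) (by nlinarith))
  have hbp := le_barycentric hd hs hb4d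
  have hpq := barycentric_le_two_mul_barycentric_shift hs hε hdε
  have ht : (fun i ↦ s i + ε) ∈ Sd d :=
    mem_Sd_of_nonneg_of_sum_le_one (fun i ↦ add_nonneg (hb.le.trans (hbp i.succ)) hε)
      (by linarith [sum_add_const s ε, sum_le_three_quarters hs])
  rw [dirKb_eq_dirichletPDF ht]
  refine le_trans ?_ (le_dirichletPDF hb hbp (sum_barycentric s)
    fun j ↦ by linarith [hbp j, hpq j])
  have hKL := neg_two_mul_sum_sq_div_le_sum_mul_log_div (fun j ↦ hb.trans_le (hbp j)) hpq
    (by rw [sum_barycentric, sum_barycentric])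
  have hχ := sum_sq_div_barycentric_shift_le (ε := ε) hd hs
  have hbound : -16 * d ^ 2 * δ ^ 2 * b = -2 * (8 * d ^ 2 * ε ^ 2) := by rw [hε_sq]; ring
  rw [mul_right_comm]
  gcongr
  rw [le_div_iff₀ hb, hbound]
  linarith
end
end

section
/- Let d ≥ 1, β > 0 and L > 0, and let m be the largest integer strictly less than β. Then there exists a constant M = M(d, β, L) such that every f ∈ Σ(d, β, L) satisfies max over multi-indices γ with |γ| ≤ m of sup_{s ∈ Int(S_d)} |D^γ f(s)| ≤ M; in particular all partial derivatives of order at most m of members of Σ(d, β, L) are uniformly bounded on the interior of the simplex. -/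
open MeasureTheory Filter Topology
open scoped ENNReal BigOperators

noncomputable section

/-!
A mixed finite difference `Δ_{h e_{v₁}} ⋯ Δ_{h e_{vⱼ}} f` is a signed sum of `2ʲ` translates of
`f`, so its `L¹` norm is at most `2ʲ ∫ |f| = 2ʲ`; hence it is at most `2ʲ / hᵈ` at some point of
the box `(0, h)ᵈ` near the vertex `0`. By the mean value theorem, applied once per direction, it
equals `hʲ ∂ᵛ f` at some point of the simplex, so every partial derivative of order `j ≤ m` is at
most `(2 / h)ʲ / hᵈ` somewhere. The Hölder condition bounds the oscillation of the derivatives of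
order `m` on the simplex, whose `ℓ¹` diameter is `2`, and the mean value theorem bounds the
oscillation of a derivative of order `j` by twice the bound on those of order `j + 1`. Downward
induction on `j` then bounds all of them uniformly.
-/

open Set
open scoped Pointwise

section MixedDiff

variable {E F : Type*}

def mixedDiff [Add E] [Sub F] (g : E → F) : List E → E → F
  | [] => g
  | u :: l => fun x => mixedDiff g l (x + u) - mixedDiff g l x

section Integral

variable [AddGroup E] [MeasurableSpace E] [MeasurableAdd E] {μ : Measure E}
  [μ.IsAddRightInvariant] {g : E → ℝ}

theorem integrable_mixedDiff (hg : Integrable g μ) : ∀ l : List E, Integrable (mixedDiff g l) μ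
  | [] => hg
  | u :: l => ((integrable_mixedDiff hg l).comp_add_right u).sub (integrable_mixedDiff hg l)

theorem integral_abs_mixedDiff_le (hg : Integrable g μ) :
    ∀ l : List E, ∫ x, |mixedDiff g l x| ∂μ ≤ 2 ^ l.length * ∫ x, |g x| ∂μ
  | [] => by simp [mixedDiff]
  | u :: l => by
    have hl := (integrable_mixedDiff hg l).abs
    calc ∫ x, |mixedDiff g (u :: l) x| ∂μ
        ≤ ∫ x, (|mixedDiff g l (x + u)| + |mixedDiff g l x|) ∂μ :=
          integral_mono ((integrable_mixedDiff hg (u :: l)).abs) ((hl.comp_add_right u).add hl)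
            fun x => abs_sub _ _
      _ = 2 * ∫ x, |mixedDiff g l x| ∂μ := by
          rw [integral_add (hl.comp_add_right u) hl,
            integral_add_right_eq_self (fun x => |mixedDiff g l x|) u, two_mul]
      _ ≤ 2 ^ (u :: l).length * ∫ x, |g x| ∂μ := by
          rw [List.length_cons, pow_succ', mul_assoc]
          exact mul_le_mul_of_nonneg_left (integral_abs_mixedDiff_le hg l) zero_le_two

end Integral

variable [NormedAddCommGroup E] [NormedSpace ℝ E] [NormedAddCommGroup F] [NormedSpace ℝ F]

def zonotope (l : List E) : Set E := (l.map (segment ℝ 0)).sum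

theorem mixedDiff_apply (g' : E → E →L[ℝ] F) (u : E) :
    ∀ (l : List E) (y : E), mixedDiff g' l y u = mixedDiff (fun z => g' z u) l y
  | [], _ => rfl
  | v :: l, y => by
    simp only [mixedDiff, sub_apply, mixedDiff_apply g' u l]

theorem hasFDerivAt_mixedDiff {g : E → F} {g' : E → E →L[ℝ] F} :
    ∀ (l : List E) (y : E), (∀ z ∈ zonotope l, HasFDerivAt g (g' (y + z)) (y + z)) →
      HasFDerivAt (mixedDiff g l) (mixedDiff g' l y) y
  | [], y, hg => by simpa [zonotope, mixedDiff] using hg 0 rfl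
  | u :: l, y, hg => by
    have hshift := hasFDerivAt_mixedDiff l (y + u) fun z hz => by
      simpa only [add_assoc] using
        hg (u + z) (Set.add_mem_add (right_mem_segment ℝ 0 u) hz)
    have hbase := hasFDerivAt_mixedDiff l y fun z hz => by
      simpa only [zero_add] using hg (0 + z) (Set.add_mem_add (left_mem_segment ℝ 0 u) hz)
    exact ((hasFDerivAt_comp_add_right u).2 hshift).sub hbase

end MixedDiff

section IteratedLineDeriv

variable {E : Type*} [NormedAddCommGroup E] [NormedSpace ℝ E] {f : E → ℝ}

def iteratedLineDeriv (f : E → ℝ) (l : List E) (x : E) : ℝ :=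
  iteratedFDeriv ℝ l.length f x l.get

theorem iteratedLineDeriv_nil : iteratedLineDeriv f [] = f :=
  funext fun _ => iteratedFDeriv_zero_apply _

theorem iteratedLineDeriv_ofFn {n : ℕ} (w : Fin n → E) (x : E) :
    iteratedLineDeriv f (List.ofFn w) x = iteratedFDeriv ℝ n f x w := by
  have hcast : ∀ k (hk : k = n),
      iteratedFDeriv ℝ k f x (w ∘ Fin.cast hk) = iteratedFDeriv ℝ n f x w := by
    rintro k rfl; rfl
  rw [← hcast _ (List.length_ofFn (f := w))]
  unfold iteratedLineDeriv
  congr 1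
  funext i
  simp only [List.get_ofFn, Function.comp_apply]

theorem iteratedLineDeriv_cons (u : E) (l : List E) (x : E) :
    iteratedLineDeriv f (u :: l) x = fderiv ℝ (iteratedFDeriv ℝ l.length f) x u l.get :=
  iteratedFDeriv_succ_apply_left _

theorem hasFDerivAt_iteratedLineDeriv {l : List E} {x : E}
    (hf : DifferentiableAt ℝ (iteratedFDeriv ℝ l.length f) x) :
    HasFDerivAt (iteratedLineDeriv f l)
      ((ContinuousMultilinearMap.apply ℝ (fun _ => E) ℝ l.get).comp
        (fderiv ℝ (iteratedFDeriv ℝ l.length f) x)) x :=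
  (ContinuousMultilinearMap.apply ℝ _ ℝ l.get).hasFDerivAt.comp x hf.hasFDerivAt

theorem ContDiffOn.differentiableAt_iteratedFDeriv {F : Type*} [NormedAddCommGroup F]
    [NormedSpace ℝ F] {g : E → F} {U : Set E} {n k : ℕ} (hg : ContDiffOn ℝ n g U) (hU : IsOpen U)
    (hk : k < n) {x : E} (hx : x ∈ U) : DifferentiableAt ℝ (iteratedFDeriv ℝ k g) x :=
  (hg.contDiffAt (hU.mem_nhds hx)).differentiableAt_iteratedFDeriv (by exact_mod_cast hk)

theorem exists_mixedDiff_iteratedLineDeriv_eq {U : Set E} (hU : IsOpen U) {n : ℕ}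
    (hf : ContDiffOn ℝ n f U) :
    ∀ (l w : List E) (x : E), l.length + w.length ≤ n → (∀ z ∈ zonotope l, x + z ∈ U) →
      ∃ ξ ∈ U, mixedDiff (iteratedLineDeriv f w) l x = iteratedLineDeriv f (l.reverse ++ w) ξ
  | [], w, x, _, hx => ⟨x, by simpa using hx 0 rfl, rfl⟩
  | u :: l, w, x, hlen, hx => by
    have hsegU : ∀ y ∈ segment ℝ x (x + u), ∀ z ∈ zonotope l, y + z ∈ U := by
      intro y hy z hz
      have htrans := segment_translate_image ℝ x 0 u
      rw [add_zero] at htrans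
      rw [← htrans] at hy
      obtain ⟨s, hs, rfl⟩ := hy
      simpa only [add_assoc] using hx (s + z) (add_mem_add hs hz)
    obtain ⟨y, hy, hmvt⟩ := domain_mvt (f := mixedDiff (iteratedLineDeriv f w) l)
      (f' := mixedDiff (fun z => (ContinuousMultilinearMap.apply ℝ (fun _ => E) ℝ w.get).comp
        (fderiv ℝ (iteratedFDeriv ℝ w.length f) z)) l)
      (fun y hy => (hasFDerivAt_mixedDiff l y fun z hz => hasFDerivAt_iteratedLineDeriv <|
        hf.differentiableAt_iteratedFDeriv hU (by simp only [List.length_cons] at hlen; omega)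
          (hsegU y hy z hz)).hasFDerivWithinAt)
      (convex_segment _ _) (left_mem_segment ℝ _ _) (right_mem_segment ℝ _ _)
    have hcons : (fun z => (ContinuousMultilinearMap.apply ℝ (fun _ => E) ℝ w.get).comp
        (fderiv ℝ (iteratedFDeriv ℝ w.length f) z) u) = iteratedLineDeriv f (u :: w) :=
      funext fun z => (iteratedLineDeriv_cons u w z).symm
    rw [add_sub_cancel_left, mixedDiff_apply, hcons] at hmvt
    obtain ⟨ξ, hξ, hξeq⟩ := exists_mixedDiff_iteratedLineDeriv_eq hU hf l (u :: w) y
      (by simp only [List.length_cons] at hlen ⊢; omega) (hsegU y hy)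
    refine ⟨ξ, hξ, ?_⟩
    rw [List.reverse_cons, List.append_assoc, List.singleton_append, ← hξeq, ← hmvt]
    rfl

end IteratedLineDeriv

theorem abs_sub_le_of_abs_fderiv_single_le {ι : Type*} [Fintype ι] [DecidableEq ι]
    {U : Set (ι → ℝ)} (hU : Convex ℝ U) {g : (ι → ℝ) → ℝ} {g' : (ι → ℝ) → (ι → ℝ) →L[ℝ] ℝ}
    (hg : ∀ x ∈ U, HasFDerivWithinAt g (g' x) U x) {M : ℝ}
    (hM : ∀ x ∈ U, ∀ i, |g' x (Pi.single i 1)| ≤ M) {s t : ι → ℝ} (hs : s ∈ U) (ht : t ∈ U) :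
    |g s - g t| ≤ M * ∑ i, |s i - t i| := by
  obtain ⟨z, hz, hzeq⟩ := domain_mvt hg hU ht hs
  have hzU := hU.segment_subset ht hs hz
  rw [hzeq, pi_eq_sum_univ' (s - t), map_sum, Finset.mul_sum]
  refine (Finset.abs_sum_le_sum_abs _ _).trans (Finset.sum_le_sum fun i _ => ?_)
  rw [map_smul, smul_eq_mul, abs_mul, mul_comm M, Pi.sub_apply]
  exact mul_le_mul_of_nonneg_left (hM z hzU i) (abs_nonneg _)

theorem zonotope_subset_nonneg_sum_le {ι : Type*} [Fintype ι] {c : ℝ} :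
    ∀ {l : List (ι → ℝ)}, (∀ u ∈ l, 0 ≤ u ∧ ∑ i, u i ≤ c) →
      zonotope l ⊆ {z | 0 ≤ z ∧ ∑ i, z i ≤ l.length * c}
  | [], _ => by simp [zonotope]
  | u :: l, hl => by
    rintro _ ⟨s, hs, z, hz, rfl⟩
    obtain ⟨hu₀, huc⟩ := hl u List.mem_cons_self
    obtain ⟨hz₀, hzc⟩ :=
      zonotope_subset_nonneg_sum_le (fun v hv => hl v (List.mem_cons_of_mem _ hv)) hz
    obtain ⟨hs₀, hsu⟩ := segment_subset_Icc hu₀ hs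
    have hsc : ∑ i, s i ≤ c := (Finset.sum_le_sum fun i _ => hsu i).trans huc
    refine ⟨add_nonneg hs₀ hz₀, ?_⟩
    simp only [Pi.add_apply, Finset.sum_add_distrib, List.length_cons, Nat.cast_succ]
    linarith

theorem exists_abs_le_integral_abs_div {α : Type*} [MeasurableSpace α] {μ : Measure α}
    {F : α → ℝ} {Q : Set α} (hF : Integrable F μ) (hQ₀ : μ Q ≠ 0) (hQ : μ Q ≠ ∞) :
    ∃ x ∈ Q, |F x| ≤ (∫ y, |F y| ∂μ) / μ.real Q := by
  obtain ⟨x, hx, hle⟩ := exists_le_setAverage hQ₀ hQ hF.abs.integrableOn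
  refine ⟨x, hx, hle.trans ?_⟩
  rw [setAverage_eq, smul_eq_mul, inv_mul_eq_div]
  exact div_le_div_of_nonneg_right
    (setIntegral_le_integral hF.abs (Eventually.of_forall fun _ => abs_nonneg _))
    measureReal_nonneg

section Simplex

theorem convex_Sd (d : ℕ) : Convex ℝ (Sd d) := by
  rintro x ⟨hx, hxs⟩ y ⟨hy, hys⟩ a b ha hb hab
  refine ⟨fun i => ⟨?_, ?_⟩, ?_⟩
  · simp only [Pi.add_apply, Pi.smul_apply, smul_eq_mul]
    nlinarith [hx i, hy i]
  · simp only [Pi.add_apply, Pi.smul_apply, smul_eq_mul]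
    nlinarith [hx i, hy i]
  · simp only [Pi.add_apply, Pi.smul_apply, smul_eq_mul, Finset.sum_add_distrib,
      ← Finset.mul_sum]
    nlinarith

variable {d : ℕ}

theorem mem_interior_Sd {x : Fin d → ℝ} (hpos : ∀ i, 0 < x i) (hsum : ∑ i, x i < 1) :
    x ∈ interior (Sd d) := by
  have hopen : IsOpen ({y : Fin d → ℝ | ∀ i, 0 < y i} ∩ {y | ∑ i, y i < 1}) := by
    rw [Set.ofPred_forall]
    exact (isOpen_iInter_of_finite fun i => isOpen_lt continuous_const (continuous_apply i)).inter
      (isOpen_lt (continuous_finsetSum _ fun i _ => continuous_apply i) continuous_const)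
  refine interior_maximal ?_ hopen ⟨hpos, hsum⟩
  rintro y ⟨hy, hys⟩
  exact ⟨fun i => ⟨(hy i).le,
    (Finset.single_le_sum (fun j _ => (hy j).le) (Finset.mem_univ i)).trans hys.le⟩, hys.le⟩

theorem sum_abs_sub_le_two {s t : Fin d → ℝ} (hs : s ∈ Sd d) (ht : t ∈ Sd d) :
    ∑ i, |s i - t i| ≤ 2 :=
  calc ∑ i, |s i - t i| ≤ ∑ i, (s i + t i) :=
        Finset.sum_le_sum fun i _ =>
          abs_sub_le_iff.2 ⟨by linarith [(ht.1 i).1], by linarith [(hs.1 i).1]⟩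
    _ ≤ 2 := by rw [Finset.sum_add_distrib]; linarith [hs.2, ht.2]

theorem Dpartial_eq_iteratedLineDeriv {j : ℕ} (f : (Fin d → ℝ) → ℝ) (v : Fin j → Fin d)
    {s : Fin d → ℝ} (hs : s ∈ interior (Sd d)) :
    Dpartial d j f v s = iteratedLineDeriv f (List.ofFn fun i => Pi.single (v i) 1) s := by
  rw [iteratedLineDeriv_ofFn, Dpartial, iteratedFDerivWithin_of_isOpen j isOpen_interior hs]

variable {f : (Fin d → ℝ) → ℝ}

theorem abs_Dpartial_sub_le {n j : ℕ} (hf : ContDiffOn ℝ n f (interior (Sd d))) (hj : j < n)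
    (v : Fin j → Fin d) {M : ℝ}
    (hM : ∀ i, ∀ x ∈ interior (Sd d), |Dpartial d (j + 1) f (Fin.cons i v) x| ≤ M)
    {s t : Fin d → ℝ} (hs : s ∈ interior (Sd d)) (ht : t ∈ interior (Sd d)) :
    |Dpartial d j f v s - Dpartial d j f v t| ≤ M * ∑ i, |s i - t i| := by
  set w := List.ofFn fun i => (Pi.single (v i) 1 : Fin d → ℝ)
  rw [Dpartial_eq_iteratedLineDeriv f v hs, Dpartial_eq_iteratedLineDeriv f v ht]
  refine abs_sub_le_of_abs_fderiv_single_le (convex_Sd d).interior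
    (fun x hx => (hasFDerivAt_iteratedLineDeriv (hf.differentiableAt_iteratedFDeriv
      isOpen_interior (by simpa [w] using hj) hx)).hasFDerivWithinAt) (fun x hx i => ?_) hs ht
  have hMi := hM i x hx
  rw [Dpartial_eq_iteratedLineDeriv f _ hx] at hMi
  simp only [List.ofFn_succ, Fin.cons_zero, Fin.cons_succ, iteratedLineDeriv_cons] at hMi
  exact hMi

theorem exists_abs_Dpartial_le {j : ℕ} (hf : ContDiffOn ℝ j f (interior (Sd d)))
    (hfi : Integrable f) {h : ℝ} (hh : 0 < h) (hdj : (d + j) * h < 1) (v : Fin j → Fin d) :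
    ∃ ξ ∈ interior (Sd d), |Dpartial d j f v ξ| ≤ (2 / h) ^ j / h ^ d * ∫ x, |f x| := by
  set Q : Set (Fin d → ℝ) := univ.pi fun _ => Ioo 0 h
  set w : Fin j → Fin d → ℝ := fun i => h • Pi.single (v i) 1
  set l := (List.ofFn w).reverse
  have hlen : l.length = j := by simp [l]
  have hvol : volume Q = ENNReal.ofReal h ^ d := by simp [Q, Real.volume_pi_Ioo]
  obtain ⟨x, hxQ, hx⟩ := exists_abs_le_integral_abs_div (integrable_mixedDiff hfi l)
    (by rw [hvol]; exact pow_ne_zero _ (ENNReal.ofReal_pos.2 hh).ne')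
    (by rw [hvol]; exact ENNReal.pow_ne_top ENNReal.ofReal_ne_top)
  have hxl : ∀ z ∈ zonotope l, x + z ∈ interior (Sd d) := by
    intro z hz
    have hwl : ∀ u ∈ l, 0 ≤ u ∧ ∑ i, u i ≤ h := by
      simp only [l, w, List.mem_reverse, List.mem_ofFn]
      rintro _ ⟨k, rfl⟩
      refine ⟨smul_nonneg hh.le (Pi.single_nonneg.2 zero_le_one), ?_⟩
      simp [Pi.single_apply]
    obtain ⟨hz₀, hzh⟩ := zonotope_subset_nonneg_sum_le hwl hz
    have hxh : ∑ i, x i ≤ d * h :=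
      calc ∑ i, x i ≤ ∑ _i : Fin d, h :=
            Finset.sum_le_sum fun i _ => (hxQ i (mem_univ i)).2.le
        _ = d * h := by simp
    refine mem_interior_Sd
      (fun i => add_pos_of_pos_of_nonneg (hxQ i (mem_univ i)).1 (hz₀ i)) ?_
    rw [hlen] at hzh
    simp only [Pi.add_apply, Finset.sum_add_distrib]
    nlinarith
  obtain ⟨ξ, hξ, hξeq⟩ := exists_mixedDiff_iteratedLineDeriv_eq isOpen_interior hf l [] x
    (by simp [hlen]) hxl
  have hscale : mixedDiff f l x = h ^ j * Dpartial d j f v ξ := by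
    rw [iteratedLineDeriv_nil] at hξeq
    rw [hξeq, List.append_nil, List.reverse_reverse,
      iteratedLineDeriv_ofFn, Dpartial, iteratedFDerivWithin_of_isOpen j isOpen_interior hξ]
    simp [w, ContinuousMultilinearMap.map_smul_univ]
  refine ⟨ξ, hξ, ?_⟩
  calc |Dpartial d j f v ξ| = |mixedDiff f l x| / h ^ j := by
        rw [hscale, abs_mul, abs_of_pos (pow_pos hh j)]; field_simp
    _ ≤ 2 ^ j * (∫ x, |f x|) / h ^ d / h ^ j := by
        gcongr
        refine hx.trans ?_
        rw [measureReal_def, hvol, ENNReal.toReal_pow, ENNReal.toReal_ofReal hh.le]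
        gcongr
        simpa [hlen] using integral_abs_mixedDiff_le hfi l
    _ = (2 / h) ^ j / h ^ d * ∫ x, |f x| := by rw [div_pow]; field_simp

end Simplex

theorem mOf_lt {β : ℝ} (hβ : 0 < β) : (mOf β : ℝ) < β := by
  rw [mOf, Nat.cast_sub (Nat.one_le_ceil_iff.2 hβ), Nat.cast_one, sub_lt_iff_lt_add]
  exact Nat.ceil_lt_add_one hβ.le

theorem le_mOf_add_one (β : ℝ) : β ≤ mOf β + 1 :=
  (Nat.le_ceil β).trans (by exact_mod_cast (by rw [mOf]; omega : ⌈β⌉₊ ≤ mOf β + 1))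

section HolderClass

variable {d : ℕ} {β L : ℝ} {f : (Fin d → ℝ) → ℝ}

theorem integrable_of_mem_holderClass (hf : f ∈ holderClass d β L) : Integrable f := by
  have hfi : IntegrableOn f (Sd d) := by
    by_contra hfi
    exact zero_ne_one ((integral_undef hfi).symm.trans hf.2.2.1)
  exact (integrableOn_iff_integrable_of_support_subset
    fun x hx => by_contra fun hxS => hx (hf.2.1 x hxS)).1 hfi

theorem integral_abs_of_mem_holderClass (hf : f ∈ holderClass d β L) : ∫ x, |f x| = 1 := by
  simp_rw [abs_of_nonneg (hf.1 _)]
  rw [← setIntegral_eq_integral_of_forall_compl_eq_zero hf.2.1]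
  exact hf.2.2.1

theorem abs_Dpartial_sub_le_of_mem_holderClass (hβ : 0 < β) (hf : f ∈ holderClass d β L)
    (v : Fin (mOf β) → Fin d) {s t : Fin d → ℝ} (hs : s ∈ interior (Sd d))
    (ht : t ∈ interior (Sd d)) :
    |Dpartial d (mOf β) f v s - Dpartial d (mOf β) f v t| ≤ 2 * |L| := by
  have hη₀ : 0 < β - mOf β := sub_pos.2 (mOf_lt hβ)
  have hη₁ : β - mOf β ≤ 1 := by linarith [le_mOf_add_one β]
  have hst := sum_abs_sub_le_two (interior_subset hs) (interior_subset ht)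
  calc |Dpartial d (mOf β) f v s - Dpartial d (mOf β) f v t|
      ≤ L * (∑ i, |s i - t i|) ^ (β - mOf β) := hf.2.2.2.2 v s hs t ht
    _ ≤ |L| * 2 ^ (β - mOf β) :=
        mul_le_mul (le_abs_self L) (Real.rpow_le_rpow (by positivity) hst hη₀.le)
          (by positivity) (abs_nonneg L)
    _ ≤ |L| * 2 := by
        gcongr
        simpa using Real.rpow_le_rpow_of_exponent_le one_le_two hη₁
    _ = 2 * |L| := mul_comm _ _

end HolderClass

section DownwardInduction

variable {d m : ℕ} {f : (Fin d → ℝ) → ℝ}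

theorem abs_Dpartial_le_of_exists_le (hf : ContDiffOn ℝ m f (interior (Sd d))) {A B : ℝ}
    (hA : 0 ≤ A) (hB : 0 ≤ B)
    (hexists : ∀ j ≤ m, ∀ v : Fin j → Fin d, ∃ ξ ∈ interior (Sd d), |Dpartial d j f v ξ| ≤ A)
    (hosc : ∀ v : Fin m → Fin d, ∀ s ∈ interior (Sd d), ∀ t ∈ interior (Sd d),
      |Dpartial d m f v s - Dpartial d m f v t| ≤ B) :
    ∀ k j, j + k = m → ∀ v : Fin j → Fin d, ∀ s ∈ interior (Sd d),
      |Dpartial d j f v s| ≤ (A + B) * 3 ^ k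
  | 0, j, hjk, v, s, hs => by
    rw [add_zero] at hjk
    subst hjk
    obtain ⟨ξ, hξ, hξA⟩ := hexists j le_rfl v
    have hsξ := hosc v s hs ξ hξ
    have := abs_sub_abs_le_abs_sub (Dpartial d j f v s) (Dpartial d j f v ξ)
    rw [pow_zero, mul_one]
    linarith
  | k + 1, j, hjk, v, s, hs => by
    obtain ⟨ξ, hξ, hξA⟩ := hexists j (by omega) v
    have hC : 0 ≤ (A + B) * 3 ^ k := by positivity
    have hAC : A ≤ (A + B) * 3 ^ k :=
      (le_add_of_nonneg_right hB).trans
        (le_mul_of_one_le_right (by positivity) (one_le_pow₀ (by norm_num)))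
    have hsξ := abs_Dpartial_sub_le hf (by omega) v
      (fun i x hx => abs_Dpartial_le_of_exists_le hf hA hB hexists hosc k (j + 1) (by omega)
        (Fin.cons i v) x hx) hs hξ
    have h2 := sum_abs_sub_le_two (interior_subset hs) (interior_subset hξ)
    have := abs_sub_abs_le_abs_sub (Dpartial d j f v s) (Dpartial d j f v ξ)
    rw [pow_succ]
    nlinarith

end DownwardInduction

theorem holder_class_derivatives_bounded_general (d : ℕ) (β L : ℝ)
    (hβ : 0 < β) :
    ∃ M : ℝ, ∀ f ∈ holderClass d β L, ∀ j : ℕ, j ≤ mOf β →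
      ∀ v : Fin j → Fin d, ∀ s ∈ interior (Sd d), |Dpartial d j f v s| ≤ M := by
  set m := mOf β
  -- the box `(0, h)ᵈ` moved by `m` coordinate steps of length `h` stays inside the simplex
  set h : ℝ := 1 / (d + m + 1)
  have hh : 0 < h := by positivity
  have hdm : (d + m) * h < 1 := by
    rw [mul_one_div, div_lt_one (by positivity)]
    linarith
  have h2h : 1 ≤ 2 / h := by
    rw [one_le_div hh]
    exact (div_le_one_of_le₀ (le_add_of_nonneg_left (by positivity)) (by positivity)).trans
      one_le_two
  refine ⟨((2 / h) ^ m / h ^ d + 2 * |L|) * 3 ^ m, fun f hf j hj v s hs => ?_⟩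
  have hexists : ∀ j ≤ m, ∀ v : Fin j → Fin d,
      ∃ ξ ∈ interior (Sd d), |Dpartial d j f v ξ| ≤ (2 / h) ^ m / h ^ d := by
    intro j hj v
    have hdj : (d + j) * h < 1 := lt_of_le_of_lt (by gcongr) hdm
    obtain ⟨ξ, hξ, hξle⟩ := exists_abs_Dpartial_le (hf.2.2.2.1.of_le (by exact_mod_cast hj))
      (integrable_of_mem_holderClass hf) hh hdj v
    refine ⟨ξ, hξ, hξle.trans ?_⟩
    rw [integral_abs_of_mem_holderClass hf, mul_one]
    gcongr
  refine (abs_Dpartial_le_of_exists_le hf.2.2.2.1 (by positivity) (by positivity) hexists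
    (fun v s hs t ht => abs_Dpartial_sub_le_of_mem_holderClass hβ hf v hs ht)
    (m - j) j (by omega) v s hs).trans ?_
  gcongr
  · norm_num
  · exact Nat.sub_le m j

/-- Remark 1: all partial derivatives of order at most `m` of members of
`Σ(d,β,L)` are uniformly bounded on the interior of the simplex, by a constant
`M = M(d,β,L)`. -/
theorem holder_class_derivatives_bounded (d : ℕ) (hd : 1 ≤ d) (β L : ℝ)
    (hβ : 0 < β) (hL : 0 < L) :
    ∃ M : ℝ, ∀ f ∈ holderClass d β L, ∀ j : ℕ, j ≤ mOf β →
      ∀ v : Fin j → Fin d, ∀ s ∈ interior (Sd d), |Dpartial d j f v s| ≤ M :=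
  holder_class_derivatives_bounded_general d β L hβ
end
end

section
/- Let d ≥ 1. There exists b_0 > 0 (depending only on d) such that for all b ∈ (0, b_0) and all s ∈ S_d, the Dirichlet(s/b + 1, (1−‖s‖₁)/b + 1) distribution with density t ↦ K_{s/b + 1, (1−‖s‖₁)/b + 1}(t) on S_d satisfies ∫_{S_d} ‖t − s‖₁ · K_{s/b + 1, (1−‖s‖₁)/b + 1}(t) dt ≤ d · b^{1/2}. -/
open MeasureTheory Filter Topology
open scoped ENNReal BigOperators

noncomputable section

open Finset Set

/-!
Write `α = v + ∑ uᵢ`. On the simplex the Dirichlet weight `(1 - ∑ tᵢ)^(v-1) ∏ tᵢ^(uᵢ-1)` integrates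
to the multivariate Beta function `Γ(v) ∏ Γ(uᵢ) / Γ(α)`: integrating out the first coordinate of
the simplex `{t ≥ 0, ∑ tᵢ ≤ c}` leaves a simplex of size `c - t₁` in one dimension less, and
induction on the dimension reduces everything to the one-dimensional Beta integral. Multiplying
the weight by `tᵢ^k` only shifts `uᵢ` by `k`, which gives the moments `E tᵢ = uᵢ/α` and
`E tᵢ² = uᵢ(uᵢ+1)/(α(α+1))`. For `u = s/b + 1`, `v = (1 - ∑ sᵢ)/b + 1` one has `α = 1/b + d + 1`,
so `E (tᵢ - sᵢ)²` is a variance of at most `b/4` plus a squared bias of at most `(d b)²`.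
Finally `|y| ≤ r/2 + y²/(2r)` with `r = √b` turns this second-moment bound into the `ℓ¹` bound.
-/

theorem integral_rpow_mul_rpow_sub {a w c : ℝ} (ha : 0 < a) (hw : 0 < w) (hc : 0 < c) :
    ∫ x in (0 : ℝ)..c, x ^ (a - 1) * (c - x) ^ (w - 1) =
      c ^ (a + w - 1) * (Real.Gamma a * Real.Gamma w / Real.Gamma (a + w)) := by
  have hbeta : Complex.betaIntegral a w = ↑(Real.Gamma a * Real.Gamma w / Real.Gamma (a + w)) := by
    have h := Complex.Gamma_mul_Gamma_eq_betaIntegral (s := a) (t := w)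
      (by simpa using ha) (by simpa using hw)
    rw [← Complex.ofReal_add, Complex.Gamma_ofReal, Complex.Gamma_ofReal,
      Complex.Gamma_ofReal] at h
    have hne : (Real.Gamma (a + w) : ℂ) ≠ 0 := by
      exact_mod_cast (Real.Gamma_pos_of_pos (add_pos ha hw)).ne'
    push_cast
    rw [eq_div_iff hne, h, mul_comm]
  have hcomplex := Complex.betaIntegral_scaled a w hc
  have hrhs : (c : ℂ) ^ ((a : ℂ) + w - 1) = ↑(c ^ (a + w - 1)) := by
    rw [Complex.ofReal_cpow hc.le]
    push_cast
    ring_nf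
  rw [hbeta, hrhs, ← Complex.ofReal_mul] at hcomplex
  rw [← Complex.ofReal_inj, ← hcomplex, ← intervalIntegral.integral_ofReal]
  refine intervalIntegral.integral_congr fun x hx => ?_
  rw [Set.uIcc_of_le hc.le] at hx
  push_cast
  rw [Complex.ofReal_cpow hx.1, Complex.ofReal_cpow (sub_nonneg.2 hx.2)]
  push_cast
  ring

theorem lintegral_Icc_rpow_mul_rpow_sub {a w c : ℝ} (ha : 0 < a) (hw : 0 < w) (hc : 0 < c) :
    ∫⁻ x in Icc 0 c, ENNReal.ofReal (x ^ (a - 1) * (c - x) ^ (w - 1)) =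
      ENNReal.ofReal (c ^ (a + w - 1) * (Real.Gamma a * Real.Gamma w / Real.Gamma (a + w))) := by
  have hval := integral_rpow_mul_rpow_sub ha hw hc
  -- the integral is nonzero, so the integrand cannot fail to be integrable
  have hint : IntegrableOn (fun x : ℝ => x ^ (a - 1) * (c - x) ^ (w - 1)) (Ioc 0 c) := by
    refine (intervalIntegrable_iff_integrableOn_Ioc_of_le hc.le).1
      (intervalIntegral.intervalIntegrable_of_integral_ne_zero ?_)
    rw [hval]
    exact (mul_pos (Real.rpow_pos_of_pos hc _) (div_pos (mul_pos (Real.Gamma_pos_of_pos ha)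
      (Real.Gamma_pos_of_pos hw)) (Real.Gamma_pos_of_pos (add_pos ha hw)))).ne'
  have hnonneg : 0 ≤ᵐ[volume.restrict (Ioc 0 c)] fun x : ℝ => x ^ (a - 1) * (c - x) ^ (w - 1) := by
    filter_upwards [ae_restrict_mem measurableSet_Ioc] with x hx
    exact mul_nonneg (Real.rpow_nonneg hx.1.le _) (Real.rpow_nonneg (sub_nonneg.2 hx.2) _)
  rw [setLIntegral_congr Ioc_ae_eq_Icc.symm, ← ofReal_integral_eq_lintegral_ofReal hint hnonneg,
    ← intervalIntegral.integral_of_le hc.le, hval]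

theorem lintegral_fin_succ_cons {n : ℕ} {f : (Fin (n + 1) → ℝ) → ℝ≥0∞} (hf : Measurable f) :
    ∫⁻ t, f t = ∫⁻ x, ∫⁻ y, f (Fin.cons x y) := by
  rw [← (volume_preserving_piFinSuccAbove (fun _ => ℝ) 0).symm.lintegral_comp hf,
    Measure.volume_eq_prod,
    lintegral_prod (fun z => f ((MeasurableEquiv.piFinSuccAbove (fun _ => ℝ) 0).symm z))
      (hf.comp (MeasurableEquiv.measurable _)).aemeasurable]
  simp only [MeasurableEquiv.piFinSuccAbove_symm_apply, Fin.insertNthEquiv, Equiv.coe_fn_mk,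
    Fin.insertNth_zero']

theorem integral_sum_abs_mul_le {X ι : Type*} [MeasurableSpace X] [Fintype ι] {μ : Measure X}
    {f : ι → X → ℝ} {w : X → ℝ} {r : ℝ} (hr : 0 < r) (hw : 0 ≤ᵐ[μ] w) (hw_int : Integrable w μ)
    (hw_one : ∫ x, w x ∂μ = 1) (hf_int : ∀ i, Integrable (fun x => f i x ^ 2 * w x) μ)
    (hf : ∀ i, ∫ x, f i x ^ 2 * w x ∂μ ≤ r ^ 2) :
    ∫ x, (∑ i, |f i x|) * w x ∂μ ≤ Fintype.card ι * r := by
  have hamgm : ∀ y : ℝ, |y| ≤ r / 2 + y ^ 2 / (2 * r) := fun y => by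
    rw [div_add_div _ _ two_ne_zero (by positivity), le_div_iff₀ (by positivity)]
    nlinarith [sq_nonneg (|y| - r), sq_abs y]
  have hterm_int : ∀ i, Integrable (fun x => r / 2 * w x + f i x ^ 2 * w x / (2 * r)) μ :=
    fun i => (hw_int.const_mul _).add ((hf_int i).div_const _)
  calc ∫ x, (∑ i, |f i x|) * w x ∂μ
      ≤ ∫ x, ∑ i, (r / 2 * w x + f i x ^ 2 * w x / (2 * r)) ∂μ := by
        refine integral_mono_of_nonneg ?_ (integrable_finsetSum _ fun i _ => hterm_int i) ?_
        · filter_upwards [hw] with x hx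
          exact mul_nonneg (sum_nonneg fun i _ => abs_nonneg _) hx
        · filter_upwards [hw] with x hx
          rw [sum_mul]
          refine sum_le_sum fun i _ => ?_
          calc |f i x| * w x ≤ (r / 2 + f i x ^ 2 / (2 * r)) * w x :=
                mul_le_mul_of_nonneg_right (hamgm (f i x)) hx
            _ = r / 2 * w x + f i x ^ 2 * w x / (2 * r) := by ring
    _ = ∑ i, (r / 2 + (∫ x, f i x ^ 2 * w x ∂μ) / (2 * r)) := by
        rw [integral_finsetSum _ fun i _ => hterm_int i]
        refine sum_congr rfl fun i _ => ?_
        rw [integral_add (hw_int.const_mul _) ((hf_int i).div_const _), integral_const_mul,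
          integral_div, hw_one, mul_one]
    _ ≤ ∑ _i : ι, r := sum_le_sum fun i _ => by
        have := div_le_div_of_nonneg_right (hf i) (by positivity : (0 : ℝ) ≤ 2 * r)
        rw [show r ^ 2 / (2 * r) = r / 2 by field_simp] at this
        linarith
    _ = Fintype.card ι * r := by rw [sum_const, card_univ, nsmul_eq_mul]

theorem mul_sub_div_sq_mul_le {α : ℝ} (hα : 0 < α) (u : ℝ) :
    u * (α - u) / (α ^ 2 * (α + 1)) ≤ 1 / (4 * (α + 1)) := by
  calc u * (α - u) / (α ^ 2 * (α + 1)) ≤ α ^ 2 / 4 / (α ^ 2 * (α + 1)) := by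
        gcongr
        nlinarith [sq_nonneg (α - 2 * u)]
    _ = 1 / (4 * (α + 1)) := by field_simp

def scaledSimplex (d : ℕ) (c : ℝ) : Set (Fin d → ℝ) := {t | (∀ i, 0 ≤ t i) ∧ ∑ i, t i ≤ c}

def dirichletWeight {d : ℕ} (u : Fin d → ℝ) (v c : ℝ) (t : Fin d → ℝ) : ℝ :=
  (c - ∑ i, t i) ^ (v - 1) * ∏ i, t i ^ (u i - 1)

def dirichletBeta {d : ℕ} (u : Fin d → ℝ) (v : ℝ) : ℝ :=
  Real.Gamma v * (∏ i, Real.Gamma (u i)) / Real.Gamma (v + ∑ i, u i)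

section Dirichlet

variable {d : ℕ} {u : Fin d → ℝ} {v : ℝ}

theorem measurableSet_scaledSimplex (d : ℕ) (c : ℝ) : MeasurableSet (scaledSimplex d c) := by
  have hnonneg : MeasurableSet {t : Fin d → ℝ | ∀ i, 0 ≤ t i} := by
    rw [ofPred_forall]
    exact .iInter fun i => measurableSet_le measurable_const (measurable_pi_apply i)
  exact hnonneg.inter (measurableSet_le (Finset.measurable_sum _ fun i _ => measurable_pi_apply i)
    measurable_const)

theorem measurable_dirichletWeight (u : Fin d → ℝ) (v c : ℝ) :
    Measurable (dirichletWeight u v c) := by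
  unfold dirichletWeight
  fun_prop

theorem dirichletWeight_nonneg (u : Fin d → ℝ) (v : ℝ) {c : ℝ} {t : Fin d → ℝ}
    (ht : t ∈ scaledSimplex d c) : 0 ≤ dirichletWeight u v c t :=
  mul_nonneg (Real.rpow_nonneg (sub_nonneg.2 ht.2) _)
    (prod_nonneg fun i _ => Real.rpow_nonneg (ht.1 i) _)

theorem cons_mem_scaledSimplex_iff {c x : ℝ} {y : Fin d → ℝ} :
    (Fin.cons x y : Fin (d + 1) → ℝ) ∈ scaledSimplex (d + 1) c ↔
      x ∈ Icc 0 c ∧ y ∈ scaledSimplex d (c - x) := by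
  simp only [scaledSimplex, mem_ofPred_eq, Fin.forall_fin_succ, Fin.cons_zero, Fin.cons_succ,
    Fin.sum_cons, Set.mem_Icc]
  have hsum_nonneg : (∀ j, 0 ≤ y j) → 0 ≤ ∑ j, y j := fun h => sum_nonneg fun j _ => h j
  constructor
  · rintro ⟨⟨hx, hy⟩, hsum⟩
    exact ⟨⟨hx, by linarith [hsum_nonneg hy]⟩, hy, by linarith⟩
  · rintro ⟨⟨hx, -⟩, hy, hsum⟩
    exact ⟨⟨hx, hy⟩, by linarith⟩

theorem dirichletWeight_cons (u : Fin (d + 1) → ℝ) (v c x : ℝ) (y : Fin d → ℝ) :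
    dirichletWeight u v c (Fin.cons x y) =
      x ^ (u 0 - 1) * dirichletWeight (Fin.tail u) v (c - x) y := by
  simp only [dirichletWeight, Fin.sum_cons, Fin.prod_univ_succ, Fin.cons_zero, Fin.cons_succ,
    Fin.tail, sub_add_eq_sub_sub]
  ring

theorem indicator_dirichletWeight_cons (u : Fin (d + 1) → ℝ) (v c x : ℝ)
    (y : Fin d → ℝ) :
    (scaledSimplex (d + 1) c).indicator (fun t => ENNReal.ofReal (dirichletWeight u v c t))
        (Fin.cons x y) =
      (Icc 0 c).indicator (fun x => ENNReal.ofReal (x ^ (u 0 - 1))) x *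
        (scaledSimplex d (c - x)).indicator
          (fun y => ENNReal.ofReal (dirichletWeight (Fin.tail u) v (c - x) y)) y := by
  by_cases hmem : (Fin.cons x y : Fin (d + 1) → ℝ) ∈ scaledSimplex (d + 1) c
  · obtain ⟨hx, hy⟩ := cons_mem_scaledSimplex_iff.1 hmem
    rw [indicator_of_mem hmem, indicator_of_mem hx, indicator_of_mem hy, dirichletWeight_cons,
      ENNReal.ofReal_mul (Real.rpow_nonneg hx.1 _)]
  · rw [indicator_of_notMem hmem]
    rw [cons_mem_scaledSimplex_iff, not_and_or] at hmem
    rcases hmem with hx | hy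
    · rw [indicator_of_notMem hx, zero_mul]
    · rw [indicator_of_notMem hy, mul_zero]

theorem lintegral_indicator_dirichletWeight_cons (u : Fin (d + 1) → ℝ) (v c x : ℝ) :
    ∫⁻ y, (scaledSimplex (d + 1) c).indicator (fun t => ENNReal.ofReal (dirichletWeight u v c t))
        (Fin.cons x y) =
      (Icc 0 c).indicator (fun x => ENNReal.ofReal (x ^ (u 0 - 1)) *
        ∫⁻ y in scaledSimplex d (c - x),
          ENNReal.ofReal (dirichletWeight (Fin.tail u) v (c - x) y)) x := by
  simp only [indicator_dirichletWeight_cons]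
  rw [lintegral_const_mul _ ((measurable_dirichletWeight _ _ _).ennreal_ofReal.indicator
    (measurableSet_scaledSimplex _ _)), lintegral_indicator (measurableSet_scaledSimplex _ _),
    indicator_mul_left]

theorem add_sum_pos (hu : ∀ i, 0 < u i) (hv : 0 < v) :
    0 < v + ∑ i, u i :=
  add_pos_of_pos_of_nonneg hv (sum_nonneg fun i _ => (hu i).le)

theorem dirichletBeta_pos (hu : ∀ i, 0 < u i) (hv : 0 < v) :
    0 < dirichletBeta u v :=
  div_pos (mul_pos (Real.Gamma_pos_of_pos hv) (prod_pos fun i _ => Real.Gamma_pos_of_pos (hu i)))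
    (Real.Gamma_pos_of_pos (add_sum_pos hu hv))

theorem dirichletBeta_succ {u : Fin (d + 1) → ℝ} (hu : ∀ i, 0 < u i)
    (hv : 0 < v) :
    dirichletBeta u v = Real.Gamma (u 0) * Real.Gamma (v + ∑ i, Fin.tail u i) /
      Real.Gamma (v + ∑ i, u i) * dirichletBeta (Fin.tail u) v := by
  have hGw := (Real.Gamma_pos_of_pos (add_sum_pos (fun i => hu (Fin.succ i)) hv)).ne'
  simp only [dirichletBeta, Fin.prod_univ_succ, Fin.tail] at hGw ⊢
  field_simp

/- Stated for the Lebesgue integral so that the induction never has to check integrability near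
the boundary, where the weight blows up when some `u i < 1` or `v < 1`. -/
theorem lintegral_scaledSimplex_dirichletWeight {c : ℝ} (hu : ∀ i, 0 < u i) (hv : 0 < v)
    (hc : 0 < c) :
    ∫⁻ t in scaledSimplex d c, ENNReal.ofReal (dirichletWeight u v c t) =
      ENNReal.ofReal (c ^ (v + ∑ i, u i - 1) * dirichletBeta u v) := by
  induction d generalizing c with
  | zero =>
    have huniv : scaledSimplex 0 c = univ := by
      ext t
      simp [scaledSimplex, hc.le]
    simp [huniv, dirichletWeight, dirichletBeta, (Real.Gamma_pos_of_pos hv).ne', volume_pi]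
  | succ d ih =>
    have htail : ∀ i, 0 < Fin.tail u i := fun i => hu _
    set w := v + ∑ i, Fin.tail u i
    have haw : u 0 + w = v + ∑ i, u i := by simp only [w, Fin.sum_univ_succ, Fin.tail]; ring
    have hβ := (dirichletBeta_pos htail hv).le
    rw [← lintegral_indicator (measurableSet_scaledSimplex _ _),
      lintegral_fin_succ_cons ((measurable_dirichletWeight u v c).ennreal_ofReal.indicator
        (measurableSet_scaledSimplex _ _)),
      lintegral_congr (lintegral_indicator_dirichletWeight_cons u v c),
      lintegral_indicator measurableSet_Icc, ← setLIntegral_congr Ioo_ae_eq_Icc]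
    calc ∫⁻ x in Ioo 0 c, ENNReal.ofReal (x ^ (u 0 - 1)) * ∫⁻ y in scaledSimplex d (c - x),
          ENNReal.ofReal (dirichletWeight (Fin.tail u) v (c - x) y)
        = ∫⁻ x in Icc 0 c, ENNReal.ofReal (x ^ (u 0 - 1) * (c - x) ^ (w - 1)) *
            ENNReal.ofReal (dirichletBeta (Fin.tail u) v) := by
          rw [← setLIntegral_congr Ioo_ae_eq_Icc]
          refine setLIntegral_congr_fun measurableSet_Ioo fun x hx => ?_
          rw [ih htail (sub_pos.2 hx.2), ← ENNReal.ofReal_mul (Real.rpow_nonneg hx.1.le _),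
            ← ENNReal.ofReal_mul' hβ, mul_assoc]
      _ = ENNReal.ofReal (c ^ (v + ∑ i, u i - 1) * dirichletBeta u v) := by
          rw [lintegral_mul_const' _ _ ENNReal.ofReal_ne_top, lintegral_Icc_rpow_mul_rpow_sub (hu 0)
            (add_sum_pos htail hv) hc, haw, ← ENNReal.ofReal_mul' hβ, mul_assoc,
            ← dirichletBeta_succ hu hv]

theorem pow_mul_dirichletWeight {i : Fin d} (hu : 0 < u i) (v c : ℝ)
    {t : Fin d → ℝ} (ht : 0 ≤ t i) (k : ℕ) :
    t i ^ k * dirichletWeight u v c t = dirichletWeight (Function.update u i (u i + k)) v c t := by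
  rcases Nat.eq_zero_or_pos k with rfl | hk
  · simp
  have hpow : t i ^ (u i + k - 1) = t i ^ (u i - 1) * t i ^ k := by
    rw [add_sub_right_comm, Real.rpow_add_natCast' ht (by
      have : (1 : ℝ) ≤ k := by exact_mod_cast hk
      linarith)]
  have hprod : ∏ j, t j ^ (Function.update u i (u i + k) j - 1) =
      ∏ j, Function.update (fun j => t j ^ (u j - 1)) i (t i ^ (u i + k - 1)) j :=
    prod_congr rfl fun j _ => by rcases eq_or_ne j i with rfl | hji <;> simp [*]
  rw [dirichletWeight, dirichletWeight, hprod, prod_update_of_mem (mem_univ i), hpow,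
    sdiff_singleton_eq_erase, ← mul_prod_erase univ (fun j => t j ^ (u j - 1)) (mem_univ i)]
  ring

theorem Sd_eq_scaledSimplex (d : ℕ) : Sd d = scaledSimplex d 1 := by
  ext t
  refine ⟨fun ht => ⟨fun i => (ht.1 i).1, ht.2⟩, fun ht => ⟨fun i => ⟨ht.1 i, ?_⟩, ht.2⟩⟩
  exact (single_le_sum (fun j _ => ht.1 j) (mem_univ i)).trans ht.2

theorem measurableSet_Sd (d : ℕ) : MeasurableSet (Sd d) := by
  rw [Sd_eq_scaledSimplex]
  exact measurableSet_scaledSimplex d 1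

theorem lintegral_Sd_dirichletWeight (hu : ∀ i, 0 < u i) (hv : 0 < v) :
    ∫⁻ t in Sd d, ENNReal.ofReal (dirichletWeight u v 1 t) =
      ENNReal.ofReal (dirichletBeta u v) := by
  rw [Sd_eq_scaledSimplex, lintegral_scaledSimplex_dirichletWeight hu hv one_pos,
    Real.one_rpow, one_mul]

theorem dirichletWeight_nonneg_ae_Sd (u : Fin d → ℝ) (v : ℝ) :
    0 ≤ᵐ[volume.restrict (Sd d)] dirichletWeight u v 1 := by
  filter_upwards [ae_restrict_mem (measurableSet_Sd d)] with t ht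
  exact dirichletWeight_nonneg u v (Sd_eq_scaledSimplex d ▸ ht)

theorem integrableOn_Sd_dirichletWeight (hu : ∀ i, 0 < u i) (hv : 0 < v) :
    IntegrableOn (dirichletWeight u v 1) (Sd d) :=
  ⟨(measurable_dirichletWeight u v 1).aestronglyMeasurable,
    (hasFiniteIntegral_iff_ofReal (dirichletWeight_nonneg_ae_Sd u v)).2
      (by rw [lintegral_Sd_dirichletWeight hu hv]; exact ENNReal.ofReal_lt_top)⟩

theorem integral_Sd_dirichletWeight (hu : ∀ i, 0 < u i) (hv : 0 < v) :
    ∫ t in Sd d, dirichletWeight u v 1 t = dirichletBeta u v := by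
  rw [integral_eq_lintegral_of_nonneg_ae (dirichletWeight_nonneg_ae_Sd u v)
    (measurable_dirichletWeight u v 1).aestronglyMeasurable, lintegral_Sd_dirichletWeight hu hv,
    ENNReal.toReal_ofReal (dirichletBeta_pos hu hv).le]

theorem dirK_eq_indicator (u : Fin d → ℝ) (v : ℝ) :
    dirK d u v = (Sd d).indicator fun t => (dirichletBeta u v)⁻¹ * dirichletWeight u v 1 t := by
  simp only [dirK, dirichletBeta, dirichletWeight, inv_div, mul_assoc]

theorem dirK_nonneg (hu : ∀ i, 0 < u i) (hv : 0 < v) (t : Fin d → ℝ) : 0 ≤ dirK d u v t := by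
  rw [dirK_eq_indicator]
  exact indicator_nonneg (fun t ht => mul_nonneg (inv_nonneg.2 (dirichletBeta_pos hu hv).le)
    (dirichletWeight_nonneg u v (Sd_eq_scaledSimplex d ▸ ht))) t

theorem integrableOn_Sd_dirK (hu : ∀ i, 0 < u i) (hv : 0 < v) :
    IntegrableOn (dirK d u v) (Sd d) := by
  rw [dirK_eq_indicator, IntegrableOn, integrable_indicator_iff (measurableSet_Sd d)]
  exact ((integrableOn_Sd_dirichletWeight hu hv).const_mul _).integrableOn

theorem integral_Sd_dirK (hu : ∀ i, 0 < u i) (hv : 0 < v) : ∫ t in Sd d, dirK d u v t = 1 := by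
  rw [dirK_eq_indicator, setIntegral_indicator (measurableSet_Sd d), inter_self,
    integral_const_mul, integral_Sd_dirichletWeight hu hv, inv_mul_cancel₀
    (dirichletBeta_pos hu hv).ne']

theorem pow_mul_dirK_eqOn {i : Fin d} (hu : 0 < u i) (k : ℕ) :
    EqOn (fun t => t i ^ k * dirK d u v t)
      (fun t => (dirichletBeta u v)⁻¹ * dirichletWeight (Function.update u i (u i + k)) v 1 t)
      (Sd d) := fun t ht => by
  simp only [dirK_eq_indicator, indicator_of_mem ht, ← pow_mul_dirichletWeight hu v 1 (ht.1 i).1]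
  ring

theorem update_add_pos (hu : ∀ i, 0 < u i) (i : Fin d) {k : ℝ} (hk : 0 ≤ k) (j : Fin d) :
    0 < Function.update u i (u i + k) j := by
  rcases eq_or_ne j i with rfl | hji
  · simpa using add_pos_of_pos_of_nonneg (hu j) hk
  · simpa [hji] using hu j

theorem integrableOn_Sd_pow_mul_dirK (hu : ∀ i, 0 < u i) (hv : 0 < v) (i : Fin d) (k : ℕ) :
    IntegrableOn (fun t => t i ^ k * dirK d u v t) (Sd d) :=
  IntegrableOn.congr_fun
    ((integrableOn_Sd_dirichletWeight (update_add_pos hu i k.cast_nonneg) hv).const_mul _)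
    (pow_mul_dirK_eqOn (hu i) k).symm (measurableSet_Sd d)

theorem dirichletBeta_update_div (hu : ∀ i, 0 < u i) (hv : 0 < v) (i : Fin d) (k : ℝ) :
    dirichletBeta (Function.update u i (u i + k)) v / dirichletBeta u v =
      Real.Gamma (u i + k) / Real.Gamma (u i) *
        (Real.Gamma (v + ∑ j, u j) / Real.Gamma (v + ∑ j, u j + k)) := by
  have hsum : ∑ j, Function.update u i (u i + k) j = ∑ j, u j + k := by
    rw [sum_update_of_mem (mem_univ i), sdiff_singleton_eq_erase, ← add_sum_erase _ _ (mem_univ i)]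
    ring
  have hprod : ∏ j, Real.Gamma (Function.update u i (u i + k) j) =
      Real.Gamma (u i + k) * ∏ j ∈ univ.erase i, Real.Gamma (u j) := by
    rw [← mul_prod_erase univ _ (mem_univ i), Function.update_self]
    congr 1
    exact prod_congr rfl fun j hj => by rw [Function.update_of_ne (ne_of_mem_erase hj)]
  have hGv := (Real.Gamma_pos_of_pos hv).ne'
  have hGu := (Real.Gamma_pos_of_pos (hu i)).ne'
  have hGα := (Real.Gamma_pos_of_pos (add_sum_pos hu hv)).ne'
  have hP : ∏ j ∈ univ.erase i, Real.Gamma (u j) ≠ 0 :=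
    (prod_pos fun j _ => Real.Gamma_pos_of_pos (hu j)).ne'
  rw [dirichletBeta, dirichletBeta, hsum, hprod, ← mul_prod_erase univ _ (mem_univ i), ← add_assoc]
  field_simp

theorem integral_Sd_pow_mul_dirK (hu : ∀ i, 0 < u i) (hv : 0 < v) (i : Fin d) (k : ℕ) :
    ∫ t in Sd d, t i ^ k * dirK d u v t =
      Real.Gamma (u i + k) / Real.Gamma (u i) *
        (Real.Gamma (v + ∑ j, u j) / Real.Gamma (v + ∑ j, u j + k)) := by
  rw [setIntegral_congr_fun (measurableSet_Sd d) (pow_mul_dirK_eqOn (hu i) k), integral_const_mul,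
    integral_Sd_dirichletWeight (update_add_pos hu i k.cast_nonneg) hv, inv_mul_eq_div,
    dirichletBeta_update_div hu hv i k]

theorem integral_Sd_mul_dirK (hu : ∀ i, 0 < u i) (hv : 0 < v) (i : Fin d) :
    ∫ t in Sd d, t i * dirK d u v t = u i / (v + ∑ j, u j) := by
  have h := integral_Sd_pow_mul_dirK hu hv i 1
  have hα := (add_sum_pos hu hv).ne'
  simp only [pow_one, Nat.cast_one] at h
  rw [h, Real.Gamma_add_one (hu i).ne', Real.Gamma_add_one hα]
  field_simp [(Real.Gamma_pos_of_pos (hu i)).ne', (Real.Gamma_pos_of_pos (add_sum_pos hu hv)).ne']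

theorem integral_Sd_sq_mul_dirK (hu : ∀ i, 0 < u i) (hv : 0 < v) (i : Fin d) :
    ∫ t in Sd d, t i ^ 2 * dirK d u v t =
      u i * (u i + 1) / ((v + ∑ j, u j) * (v + ∑ j, u j + 1)) := by
  have h := integral_Sd_pow_mul_dirK hu hv i 2
  have hα := add_sum_pos hu hv
  rw [Nat.cast_two, show u i + 2 = u i + 1 + 1 by ring,
    show v + ∑ j, u j + 2 = v + ∑ j, u j + 1 + 1 by ring] at h
  rw [h, Real.Gamma_add_one (by linarith [hu i]), Real.Gamma_add_one (hu i).ne',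
    Real.Gamma_add_one (by linarith), Real.Gamma_add_one hα.ne']
  field_simp [(Real.Gamma_pos_of_pos (hu i)).ne', (Real.Gamma_pos_of_pos hα).ne']

theorem integrableOn_Sd_sq_sub_mul_dirK (hu : ∀ i, 0 < u i) (hv : 0 < v) (i : Fin d) (x : ℝ) :
    IntegrableOn (fun t => (t i - x) ^ 2 * dirK d u v t) (Sd d) := by
  have h := ((integrableOn_Sd_pow_mul_dirK hu hv i 2).sub
    ((integrableOn_Sd_pow_mul_dirK hu hv i 1).const_mul (2 * x))).add
    ((integrableOn_Sd_pow_mul_dirK hu hv i 0).const_mul (x ^ 2))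
  refine h.congr_fun (fun t _ => ?_) (measurableSet_Sd d)
  simp only [Pi.add_apply, Pi.sub_apply]
  ring

theorem integral_Sd_sq_sub_mul_dirK (hu : ∀ i, 0 < u i) (hv : 0 < v) (i : Fin d) (x : ℝ) :
    ∫ t in Sd d, (t i - x) ^ 2 * dirK d u v t =
      u i * (v + ∑ j, u j - u i) / ((v + ∑ j, u j) ^ 2 * (v + ∑ j, u j + 1)) +
        (u i / (v + ∑ j, u j) - x) ^ 2 := by
  have hexpand : (fun t => (t i - x) ^ 2 * dirK d u v t) =
      fun t => t i ^ 2 * dirK d u v t - 2 * x * (t i * dirK d u v t) + x ^ 2 * dirK d u v t := by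
    funext t
    ring
  have h1 : IntegrableOn (fun t => t i * dirK d u v t) (Sd d) := by
    simpa using integrableOn_Sd_pow_mul_dirK hu hv i 1
  have h2 := integrableOn_Sd_pow_mul_dirK hu hv i 2
  have h12 : IntegrableOn (fun t => t i ^ 2 * dirK d u v t - 2 * x * (t i * dirK d u v t)) (Sd d) :=
    h2.sub (h1.const_mul _)
  rw [hexpand, integral_add h12 ((integrableOn_Sd_dirK hu hv).const_mul _),
    integral_sub h2 (h1.const_mul _), integral_const_mul, integral_const_mul,
    integral_Sd_sq_mul_dirK hu hv, integral_Sd_mul_dirK hu hv, integral_Sd_dirK hu hv]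
  have hα := add_sum_pos hu hv
  have hα1 : v + ∑ j, u j + 1 ≠ 0 := by linarith
  field_simp
  ring

theorem dirKb_params_pos {b : ℝ} (hb : 0 < b) {s : Fin d → ℝ} (hs : s ∈ Sd d) :
    (∀ i, 0 < s i / b + 1) ∧ 0 < (1 - ∑ i, s i) / b + 1 :=
  ⟨fun i => by have := div_nonneg (hs.1 i).1 hb.le; linarith,
    by have := div_nonneg (sub_nonneg.2 hs.2) hb.le; linarith⟩

theorem integral_Sd_sq_sub_mul_dirKb_le (hd : 1 ≤ d) {b : ℝ} (hb : 0 < b)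
    {s : Fin d → ℝ} (hs : s ∈ Sd d) (i : Fin d) :
    ∫ t in Sd d, (t i - s i) ^ 2 * dirKb d b s t ≤ b / 4 + (d * b) ^ 2 := by
  obtain ⟨hu, hv⟩ := dirKb_params_pos hb hs
  have hα : (1 - ∑ j, s j) / b + 1 + ∑ j, (s j / b + 1) = (1 + (d + 1) * b) / b := by
    rw [sum_add_distrib, ← sum_div, sum_const, card_univ, Fintype.card_fin, nsmul_eq_mul]
    field_simp
    ring
  rw [dirKb, integral_Sd_sq_sub_mul_dirK hu hv, hα]
  have hd' : (1 : ℝ) ≤ d := by exact_mod_cast hd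
  obtain ⟨hs0, hs1⟩ := hs.1 i
  set α := (1 + (d + 1) * b) / b with hα_def
  set u := s i / b + 1
  have hα0 : 0 < α := by positivity
  have hvariance : u * (α - u) / (α ^ 2 * (α + 1)) ≤ b / 4 := by
    have hαb : 1 ≤ b * (α + 1) := by rw [hα_def]; field_simp; nlinarith
    refine (mul_sub_div_sq_mul_le hα0 u).trans ?_
    rw [div_le_div_iff₀ (by positivity) (by norm_num)]
    linarith
  have hbias : u / α - s i = b * (1 - (d + 1) * s i) / (1 + (d + 1) * b) := by
    simp only [u, hα_def]
    field_simp
    ring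
  have hbias_abs : |u / α - s i| ≤ d * b := by
    rw [hbias, abs_div, abs_mul, abs_of_pos hb, abs_of_pos (by positivity : 0 < 1 + (d + 1) * b),
      div_le_iff₀ (by positivity)]
    have hlin : |1 - (d + 1) * s i| ≤ d := abs_le.2 ⟨by nlinarith, by nlinarith⟩
    calc b * |1 - (d + 1) * s i| ≤ b * d := mul_le_mul_of_nonneg_left hlin hb.le
      _ ≤ d * b * (1 + (d + 1) * b) := by
        nlinarith [mul_nonneg (mul_nonneg (by positivity : (0 : ℝ) ≤ d * b) (by positivity :
          (0 : ℝ) ≤ (d : ℝ) + 1)) hb.le]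
  have := sq_le_sq' (abs_le.1 hbias_abs).1 (abs_le.1 hbias_abs).2
  linarith

end Dirichlet

/-- Eq. (2.12): for small enough `b` (depending only on `d`) and every
`s ∈ S_d`, the mean ℓ¹-deviation of the `Dirichlet(s/b+1,(1-‖s‖₁)/b+1)` distribution from
`s` is at most `d √b`. -/
theorem dirichlet_mean_l1_deviation (d : ℕ) (hd : 1 ≤ d) :
    ∃ b0 : ℝ, 0 < b0 ∧ ∀ b ∈ Set.Ioo (0 : ℝ) b0, ∀ s ∈ Sd d,
      (∫ t in Sd d, (∑ i, |t i - s i|) * dirKb d b s t) ≤ (d : ℝ) * Real.sqrt b := by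
  have hd' : (0 : ℝ) < d := by exact_mod_cast hd
  -- `b < 3 / (4 d²)` is exactly what makes `b / 4 + (d b)² ≤ b`
  refine ⟨3 / (4 * d ^ 2), by positivity, ?_⟩
  rintro b ⟨hb, hb_lt⟩ s hs
  obtain ⟨hu, hv⟩ := dirKb_params_pos hb hs
  have hsecond : ∀ i, ∫ t in Sd d, (t i - s i) ^ 2 * dirKb d b s t ≤ Real.sqrt b ^ 2 := by
    intro i
    have hdb : (d * b) ^ 2 ≤ 3 / 4 * b := by
      rw [lt_div_iff₀ (by positivity)] at hb_lt
      nlinarith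
    rw [Real.sq_sqrt hb.le]
    linarith [integral_Sd_sq_sub_mul_dirKb_le hd hb hs i]
  have h := integral_sum_abs_mul_le (μ := volume.restrict (Sd d)) (f := fun i t => t i - s i)
    (Real.sqrt_pos.2 hb) (ae_of_all _ (dirK_nonneg hu hv)) (integrableOn_Sd_dirK hu hv)
    (integral_Sd_dirK hu hv) (fun i => integrableOn_Sd_sq_sub_mul_dirK hu hv i (s i)) hsecond
  rwa [Fintype.card_fin] at h
end
end

section
/- Let d ≥ 1 and let R(z) = √(2π) e^{−z} z^{z+1/2}/Γ(z+1) for z > 0. Define, for b > 0 and s ∈ Int(S_d), A_b(s) = [b^{(d+1)/2}(1/b + d)^{d+1/2}/((4π)^{d/2}√((1−‖s‖₁)s_1⋯s_d))] · ((2/b + 2d)/(2/b + d))^{2/b + d + 1/2} · e^{−d} · [R²((1−‖s‖₁)/b) ∏_{i=1}^d R²(s_i/b)] / [R(2(1−‖s‖₁)/b) ∏_{i=1}^d R(2 s_i/b)] · R(2/b + d)/R²(1/b + d). Then there exists a constant c > 0 depending only on d such that for all b ∈ (0,1) and all s ∈ S_d(b) = {s ∈ S_d : 1 − ‖s‖₁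 ≥ b and min(s_1,…,s_d) ≥ b}, one has A_b(s) ≥ c · b^{−d/2}/√((1 − ‖s‖₁) s_1 ⋯ s_d). -/
open MeasureTheory Filter Topology
open scoped ENNReal BigOperators

noncomputable section

/-- `R(z) = √(2π) e^{-z} z^{z+1/2} / Γ(z+1)`. -/
def Rfun (z : ℝ) : ℝ :=
  Real.sqrt (2 * Real.pi) * Real.exp (-z) * z ^ (z + 1 / 2) / Real.Gamma (z + 1)

/-- The region `S_d(b)` of the simplex at distance at least `b` from the boundary faces. -/
def SdB (d : ℕ) (b : ℝ) : Set (Fin d → ℝ) :=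
  {s ∈ Sd d | b ≤ 1 - ∑ i, s i ∧ ∀ i, b ≤ s i}

/-- The leading variance factor `A_b(s)` of Ouimet and Tolosana-Delgado (2022). -/
def varAb (d : ℕ) (b : ℝ) (s : Fin d → ℝ) : ℝ :=
  b ^ (((d : ℝ) + 1) / 2) * (1 / b + (d : ℝ)) ^ ((d : ℝ) + 1 / 2) /
      ((4 * Real.pi) ^ ((d : ℝ) / 2) * Real.sqrt ((1 - ∑ i, s i) * ∏ i, s i)) *
    ((2 / b + 2 * (d : ℝ)) / (2 / b + (d : ℝ))) ^ (2 / b + (d : ℝ) + 1 / 2) *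
    Real.exp (-(d : ℝ)) *
    (Rfun ((1 - ∑ i, s i) / b) ^ 2 * (∏ i, Rfun (s i / b) ^ 2) /
      (Rfun (2 * (1 - ∑ i, s i) / b) * ∏ i, Rfun (2 * s i / b))) *
    (Rfun (2 / b + (d : ℝ)) / Rfun (1 / b + (d : ℝ)) ^ 2)

/-!
All factors of `A_b(s)` other than the explicit prefactor are values of `R` at arguments `≥ 1`,
and there `R` is bounded above and below by positive constants. At integers,
`R(n) = √π / stirlingSeq n ∈ [e⁻¹, 1]`; between consecutive integers, the Wendel-type bounds on
`Γ` coming from its log-convexity move `log R` by at most `2`. The prefactor is at least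
`(4π)^{-d/2} b^{-d/2} / √((1 - ‖s‖₁) s_1 ⋯ s_d)` since `1/b + d ≥ 1/b`, and the power of
`(2/b + 2d)/(2/b + d)` is at least `1`.
-/

open Real

lemma Rfun_pos {z : ℝ} (hz : 0 < z) : 0 < Rfun z := by
  unfold Rfun
  have := Gamma_pos_of_pos (show 0 < z + 1 by linarith)
  positivity

lemma log_Rfun {z : ℝ} (hz : 0 < z) :
    log (Rfun z) = log (2 * π) / 2 - z + (z + 1 / 2) * log z - log (Gamma (z + 1)) := by
  have hΓ := Gamma_pos_of_pos (show 0 < z + 1 by linarith)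
  unfold Rfun
  rw [log_div (by positivity) hΓ.ne', log_mul (by positivity) (by positivity),
    log_mul (by positivity) (by positivity), log_sqrt (by positivity), log_exp, log_rpow hz]
  ring

lemma Rfun_natCast (n : ℕ) : Rfun n = √π / Stirling.stirlingSeq n := by
  have hsqrt : √(2 * π) * √n = √π * √(2 * n) := by
    rw [← sqrt_mul (by positivity), ← sqrt_mul (by positivity)]
    ring_nf
  unfold Rfun Stirling.stirlingSeq
  rw [Gamma_nat_eq_factorial, rpow_add' n.cast_nonneg (by positivity), rpow_natCast,
    ← sqrt_eq_rpow, div_pow, exp_neg, ← exp_one_pow]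
  field_simp
  exact hsqrt

lemma Rfun_natCast_le_one {n : ℕ} (hn : n ≠ 0) : Rfun n ≤ 1 := by
  rw [Rfun_natCast]
  exact div_le_one_of_le₀ (Stirling.sqrt_pi_le_stirlingSeq hn)
    ((sqrt_nonneg π).trans (Stirling.sqrt_pi_le_stirlingSeq hn))

lemma exp_neg_one_le_Rfun_natCast {n : ℕ} (hn : n ≠ 0) : exp (-1) ≤ Rfun n := by
  obtain ⟨m, rfl⟩ := Nat.exists_eq_add_one_of_ne_zero hn
  have hle : Stirling.stirlingSeq (m + 1) ≤ exp 1 / √2 := by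
    simpa using Stirling.stirlingSeq'_antitone (Nat.zero_le m)
  have hpos := Stirling.stirlingSeq'_pos m
  have h2 : (1 : ℝ) ≤ √2 * √π := by
    rw [← sqrt_mul (by norm_num)]
    exact one_le_sqrt.mpr (by nlinarith [pi_gt_three])
  rw [Rfun_natCast, exp_neg, le_div_iff₀ hpos]
  calc (exp 1)⁻¹ * Stirling.stirlingSeq (m + 1) ≤ (exp 1)⁻¹ * (exp 1 / √2) := by gcongr
    _ = 1 / √2 := by field_simp
    _ ≤ √π := by rw [div_le_iff₀ (by positivity)]; linarith

lemma log_add_le_log_add_div {a x : ℝ} (ha : 0 < a) (hx : 0 ≤ x) :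
    log (a + x) ≤ log a + x / a := by
  have h := log_le_sub_one_of_pos (div_pos (add_pos_of_pos_of_nonneg ha hx) ha)
  rw [log_div (by positivity) ha.ne', add_div, div_self ha.ne'] at h
  linarith

lemma log_Gamma_add_one {y : ℝ} (hy : 0 < y) :
    log (Gamma (y + 1)) = log (Gamma y) + log y := by
  rw [Gamma_add_one hy.ne', log_mul hy.ne' (Gamma_pos_of_pos hy).ne', add_comm]

lemma log_Gamma_natCast_add_le (n : ℕ) {x : ℝ} (hx0 : 0 ≤ x) (hx1 : x ≤ 1) :
    log (Gamma (n + x + 1)) ≤ log (Gamma (n + 1)) + x * log (n + 1) := by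
  rcases hx0.eq_or_lt with rfl | hx
  · simp
  have h := BohrMollerup.f_add_nat_le convexOn_log_Gamma (fun hy => log_Gamma_add_one hy)
    n.succ_ne_zero hx hx1
  push_cast at h
  simpa only [Function.comp_apply, add_right_comm] using h

lemma le_log_Gamma_natCast_add {n : ℕ} (hn : n ≠ 0) {x : ℝ} (hx0 : 0 ≤ x) :
    log (Gamma (n + 1)) + x * log n ≤ log (Gamma (n + x + 1)) := by
  rcases hx0.eq_or_lt with rfl | hx
  · simp
  have h := BohrMollerup.f_add_nat_ge convexOn_log_Gamma (fun hy => log_Gamma_add_one hy)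
    (Nat.succ_le_succ (Nat.one_le_iff_ne_zero.mpr hn)) hx
  push_cast at h
  simpa only [Function.comp_apply, add_sub_cancel_right, add_right_comm] using h

lemma log_Rfun_natCast_add_le {n : ℕ} (hn : n ≠ 0) {x : ℝ} (hx0 : 0 ≤ x) (hx1 : x ≤ 1) :
    log (Rfun (n + x)) ≤ log (Rfun n) + 3 / 2 := by
  have hn1 : (1 : ℝ) ≤ n := Nat.one_le_cast.mpr (Nat.one_le_iff_ne_zero.mpr hn)
  have hΓ := le_log_Gamma_natCast_add hn hx0
  have hlog : (n + x + 1 / 2) * log (n + x) ≤ (n + x + 1 / 2) * (log n + x / n) :=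
    mul_le_mul_of_nonneg_left (log_add_le_log_add_div (by positivity) hx0) (by positivity)
  have hfrac : (n + x + 1 / 2) * (x / n) ≤ x + 3 / 2 := by
    rw [← mul_div_assoc, div_le_iff₀ (by positivity)]
    nlinarith
  rw [log_Rfun (by positivity), log_Rfun (by positivity)]
  linarith

lemma log_Rfun_natCast_sub_two_le {n : ℕ} (hn : n ≠ 0) {x : ℝ} (hx0 : 0 ≤ x) (hx1 : x ≤ 1) :
    log (Rfun n) - 2 ≤ log (Rfun (n + x)) := by
  have hn1 : (1 : ℝ) ≤ n := Nat.one_le_cast.mpr (Nat.one_le_iff_ne_zero.mpr hn)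
  have hΓ := log_Gamma_natCast_add_le n hx0 hx1
  have hlog : (n + x + 1 / 2) * log n ≤ (n + x + 1 / 2) * log (n + x) :=
    mul_le_mul_of_nonneg_left (log_le_log (by positivity) (by linarith)) (by positivity)
  have hsucc : x * log (n + 1) ≤ x * (log n + 1) := by
    gcongr
    refine (log_add_le_log_add_div (by positivity) zero_le_one).trans ?_
    gcongr
    exact div_le_one_of_le₀ hn1 (by positivity)
  rw [log_Rfun (by positivity), log_Rfun (by positivity)]
  linarith

lemma Rfun_mem_Icc {z : ℝ} (hz : 1 ≤ z) : Rfun z ∈ Set.Icc (exp (-3)) (exp 3) := by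
  set n := ⌊z⌋₊
  have hn : n ≠ 0 := (Nat.floor_pos.mpr hz).ne'
  have hnz : (n : ℝ) ≤ z := Nat.floor_le (by linarith)
  have hzn : z < n + 1 := Nat.lt_floor_add_one z
  have hRn : 0 < Rfun n := Rfun_pos (by positivity)
  have hlow : -1 ≤ log (Rfun n) := (le_log_iff_exp_le hRn).mpr (exp_neg_one_le_Rfun_natCast hn)
  have hhigh : log (Rfun n) ≤ 0 := log_nonpos hRn.le (Rfun_natCast_le_one hn)
  have hsub := log_Rfun_natCast_sub_two_le hn (sub_nonneg.mpr hnz) (by linarith)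
  have hadd := log_Rfun_natCast_add_le hn (sub_nonneg.mpr hnz) (by linarith)
  rw [add_sub_cancel] at hsub hadd
  rw [← exp_log (Rfun_pos (by linarith : 0 < z))]
  constructor <;> gcongr <;> linarith

lemma exp_neg_nine_le_Rfun_sq_div {p q : ℝ} (hp : 1 ≤ p) (hq : 1 ≤ q) :
    exp (-9) ≤ Rfun p ^ 2 / Rfun q := by
  obtain ⟨hp', -⟩ := Rfun_mem_Icc hp
  obtain ⟨-, hq'⟩ := Rfun_mem_Icc hq
  have hp0 : 0 < Rfun p := (exp_pos _).trans_le hp'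
  have hq0 : 0 < Rfun q := Rfun_pos (by linarith)
  calc exp (-9) = exp (-3) ^ 2 / exp 3 := by rw [← exp_nat_mul, ← exp_sub]; norm_num
    _ ≤ Rfun p ^ 2 / Rfun q := by gcongr

lemma exp_neg_nine_le_Rfun_div_sq {p q : ℝ} (hp : 1 ≤ p) (hq : 1 ≤ q) :
    exp (-9) ≤ Rfun p / Rfun q ^ 2 := by
  obtain ⟨hp', -⟩ := Rfun_mem_Icc hp
  obtain ⟨-, hq'⟩ := Rfun_mem_Icc hq
  have hp0 : 0 < Rfun p := (exp_pos _).trans_le hp'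
  have hq0 : 0 < Rfun q := Rfun_pos (by linarith)
  calc exp (-9) = exp (-3) / exp 3 ^ 2 := by rw [← exp_nat_mul, ← exp_sub]; norm_num
    _ ≤ Rfun p / Rfun q ^ 2 := by gcongr

lemma exp_neg_nine_pow_le_Rfun_ratio {d : ℕ} {b y : ℝ} {s : Fin d → ℝ} (hb : 0 < b)
    (hy : b ≤ y) (hs : ∀ i, b ≤ s i) :
    exp (-9) ^ (d + 1) ≤
      Rfun (y / b) ^ 2 * (∏ i, Rfun (s i / b) ^ 2) /
        (Rfun (2 * y / b) * ∏ i, Rfun (2 * s i / b)) := by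
  have key : ∀ u, b ≤ u → exp (-9) ≤ Rfun (u / b) ^ 2 / Rfun (2 * u / b) := fun u hu =>
    exp_neg_nine_le_Rfun_sq_div ((one_le_div hb).mpr hu) ((one_le_div hb).mpr (by linarith))
  rw [mul_div_mul_comm, ← Finset.prod_div_distrib, pow_succ', ← Fin.prod_const]
  exact mul_le_mul (key y hy)
    (Finset.prod_le_prod (fun _ _ => (exp_pos _).le) fun i _ => key _ (hs i))
    (by positivity) ((key y hy).trans' (by positivity))

lemma rpow_neg_div_two_le_mul_rpow {b d : ℝ} (hb : 0 < b) (hd : 0 ≤ d) :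
    b ^ (-d / 2) ≤ b ^ ((d + 1) / 2) * (1 / b + d) ^ (d + 1 / 2) :=
  calc b ^ (-d / 2) = b ^ ((d + 1) / 2) * (1 / b) ^ (d + 1 / 2) := by
        rw [one_div, inv_rpow hb.le, ← rpow_neg hb.le, ← rpow_add hb]
        ring_nf
    _ ≤ b ^ ((d + 1) / 2) * (1 / b + d) ^ (d + 1 / 2) := by gcongr; linarith

theorem Ab_lower_bound_general (d : ℕ) :
    ∃ c : ℝ, 0 < c ∧ ∀ b ∈ Set.Ioo (0 : ℝ) 1, ∀ s ∈ SdB d b,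
      c * b ^ (-(d : ℝ) / 2) / Real.sqrt ((1 - ∑ i, s i) * ∏ i, s i) ≤ varAb d b s := by
  refine ⟨exp (-d) * exp (-9) ^ (d + 2) / (4 * π) ^ ((d : ℝ) / 2), by positivity, ?_⟩
  rintro b ⟨hb0, hb1⟩ s ⟨-, hy, hs⟩
  have h1b : 1 ≤ 1 / b := by rw [le_div_iff₀ hb0]; linarith
  have h2b : 2 ≤ 2 / b := by rw [le_div_iff₀ hb0]; linarith
  have hRatio := exp_neg_nine_pow_le_Rfun_ratio hb0 hy hs
  have hRatio' : exp (-9) ≤ Rfun (2 / b + d) / Rfun (1 / b + d) ^ 2 :=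
    exp_neg_nine_le_Rfun_div_sq (by linarith) (by linarith)
  calc _ = b ^ (-(d : ℝ) / 2) / ((4 * π) ^ ((d : ℝ) / 2) * √((1 - ∑ i, s i) * ∏ i, s i)) *
        1 * exp (-d) * exp (-9) ^ (d + 1) * exp (-9) := by ring
    _ ≤ varAb d b s := by
      unfold varAb
      -- `gcongr` closes the two `R`-factors with `hRatio` and `hRatio'` by assumption
      gcongr
      · exact mul_nonneg (by positivity) (hRatio.trans' (by positivity))
      · exact rpow_neg_div_two_le_mul_rpow hb0 d.cast_nonneg
      · exact one_le_rpow ((one_le_div (by positivity)).mpr (by linarith)) (by positivity)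

/-- Eq. (3.8): there is `c > 0` depending only on `d` such that for all
`b ∈ (0,1)` and all `s ∈ S_d(b)`, `A_b(s) ≥ c b^{-d/2} / √((1-‖s‖₁) s_1 ⋯ s_d)`. -/
theorem Ab_lower_bound (d : ℕ) (hd : 1 ≤ d) :
    ∃ c : ℝ, 0 < c ∧ ∀ b ∈ Set.Ioo (0 : ℝ) 1, ∀ s ∈ SdB d b,
      c * b ^ (-(d : ℝ) / 2) / Real.sqrt ((1 - ∑ i, s i) * ∏ i, s i) ≤ varAb d b s :=
  Ab_lower_bound_general d
end
end

section
/- Let d ≥ 1 and fix δ ∈ (0, 3). Define, for b > 0 and s ∈ [1/(4d), 3/(4d)]^d, Q_{b,δ}(s) = (1 − d δ b^{1/2}/(1 − ‖s‖₁))^{(1 − ‖s‖₁)/b} · ∏_{i=1}^d (1 + δ b^{1/2}/s_i)^{s_i/b}. Then, uniformly for s ∈ [1/(4d), 3/(4d)]^d as b → 0, Q_{b,δ}(s) = exp{ −(δ²/2) Σ_{i=1}^d 1/s_i − d²δ²/(2(1 − ‖s‖₁)) + O(b^{1/2}) }; in particular there exist c > 0 and b_0 > 0 depending only on d and δ such that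 Q_{b,δ}(s) ≥ c for all b ∈ (0, b_0) and all s ∈ [1/(4d), 3/(4d)]^d. -/
open MeasureTheory Filter Topology
open scoped ENNReal BigOperators

noncomputable section

/-- `Q_{b,δ}(s) = (1 - dδ√b/(1-‖s‖₁))^{(1-‖s‖₁)/b} ∏_i (1 + δ√b/s_i)^{s_i/b}`. -/
def Qbd (d : ℕ) (b δ : ℝ) (s : Fin d → ℝ) : ℝ :=
  (1 - (d : ℝ) * δ * Real.sqrt b / (1 - ∑ i, s i)) ^ ((1 - ∑ i, s i) / b) *
    ∏ i, (1 + δ * Real.sqrt b / s i) ^ (s i / b)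

/-! With `r = √b` and `A = 1 - ‖s‖₁`, `log Q_{b,δ}(s)` is
`(A / r²) log (1 - dδr / A) + ∑ᵢ (sᵢ / r²) log (1 + δr / sᵢ)`, a sum of terms
`(t / r²) log (1 + ur / t)`. The second-order Taylor expansion of such a term is
`u / r - u² / (2t)` up to `2|u|³ r / t²`. The singular parts `u / r` cancel (`u = -dδ` once,
`u = δ` for each of the `d` coordinates), and on the cube every `t` is at least `1 / (4d)`,
so the remainders are `O(√b)` uniformly. -/

open Real Finset

lemma abs_log_one_add_sub_le {z : ℝ} (hz : |z| ≤ 1 / 2) :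
    |log (1 + z) - (z - z ^ 2 / 2)| ≤ 2 * |z| ^ 3 := by
  have h := abs_log_sub_add_sum_range_le (x := -z) (by rw [abs_neg]; linarith) 2
  have hz3 : 0 ≤ |z| ^ 3 := by positivity
  calc |log (1 + z) - (z - z ^ 2 / 2)| ≤ |z| ^ 3 / (1 - |z|) := by
        convert h using 2 <;>
          simp only [sum_range_succ, range_one, sum_singleton, zero_add, pow_one,
            Nat.cast_zero, Nat.cast_one, div_one, Nat.reduceAdd, even_two, Even.neg_pow,
            sub_neg_eq_add, abs_neg]
        ring
    _ ≤ 2 * |z| ^ 3 := by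
        rw [div_le_iff₀ (by linarith)]; nlinarith

lemma abs_mul_div_le_half {c t u r : ℝ} (hc : 0 ≤ c) (hr : 0 ≤ r) (ht : 1 ≤ 4 * c * t)
    (h : 8 * c * |u| * r ≤ 1) : |u * r / t| ≤ 1 / 2 := by
  have htpos : 0 < t := pos_of_mul_pos_right (by linarith) (by positivity : 0 ≤ 4 * c)
  rw [abs_div, abs_mul, abs_of_nonneg hr, abs_of_pos htpos, div_le_iff₀ htpos]
  nlinarith [(by positivity : 0 ≤ |u| * r)]

lemma abs_mul_log_one_add_sub_le {c t u r : ℝ} (hc : 0 ≤ c) (hr : 0 < r)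
    (ht : 1 ≤ 4 * c * t) (h : 8 * c * |u| * r ≤ 1) :
    |t / r ^ 2 * log (1 + u * r / t) - (u / r - u ^ 2 / (2 * t))| ≤ 32 * c ^ 2 * |u| ^ 3 * r := by
  have htpos : 0 < t := pos_of_mul_pos_right (by linarith) (by positivity : 0 ≤ 4 * c)
  have hscale : t / r ^ 2 * (u * r / t - (u * r / t) ^ 2 / 2) = u / r - u ^ 2 / (2 * t) := by
    field_simp
  calc _ = t / r ^ 2 * |log (1 + u * r / t) - (u * r / t - (u * r / t) ^ 2 / 2)| := by
        rw [← hscale, ← mul_sub, abs_mul, abs_of_pos (by positivity)]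
    _ ≤ t / r ^ 2 * (2 * |u * r / t| ^ 3) := by
        gcongr
        exact abs_log_one_add_sub_le (abs_mul_div_le_half hc hr.le ht h)
    _ = 2 * |u| ^ 3 * r / t ^ 2 := by
        rw [abs_div, abs_mul, abs_of_pos hr, abs_of_pos htpos]
        field_simp
    _ ≤ 32 * c ^ 2 * |u| ^ 3 * r := by
        rw [div_le_iff₀ (by positivity)]
        have : 1 ≤ (4 * c * t) ^ 2 := by nlinarith
        nlinarith [(by positivity : 0 ≤ |u| ^ 3 * r)]

lemma Qbd_pos {d : ℕ} {b δ : ℝ} {s : Fin d → ℝ}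
    (h0 : 0 < 1 - d * δ * √b / (1 - ∑ i, s i)) (hi : ∀ i, 0 < 1 + δ * √b / s i) :
    0 < Qbd d b δ s :=
  mul_pos (rpow_pos_of_pos h0 _) (prod_pos fun i _ => rpow_pos_of_pos (hi i) _)

lemma log_Qbd {d : ℕ} {b δ : ℝ} {s : Fin d → ℝ}
    (h0 : 0 < 1 - d * δ * √b / (1 - ∑ i, s i)) (hi : ∀ i, 0 < 1 + δ * √b / s i) :
    log (Qbd d b δ s) = (1 - ∑ i, s i) / b * log (1 - d * δ * √b / (1 - ∑ i, s i)) +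
      ∑ i, s i / b * log (1 + δ * √b / s i) := by
  rw [Qbd, log_mul (rpow_pos_of_pos h0 _).ne'
    (prod_pos fun i _ => rpow_pos_of_pos (hi i) _).ne', log_rpow h0,
    log_prod fun i _ => (rpow_pos_of_pos (hi i) _).ne']
  simp_rw [log_rpow (hi _)]

def logQbdLimit (d : ℕ) (δ : ℝ) (s : Fin d → ℝ) : ℝ :=
  -(δ ^ 2 / 2) * (∑ i, 1 / s i) - (d : ℝ) ^ 2 * δ ^ 2 / (2 * (1 - ∑ i, s i))

lemma log_Qbd_sub_logQbdLimit {d : ℕ} {b δ : ℝ} {s : Fin d → ℝ}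
    (h0 : 0 < 1 - d * δ * √b / (1 - ∑ i, s i)) (hi : ∀ i, 0 < 1 + δ * √b / s i) :
    log (Qbd d b δ s) - logQbdLimit d δ s =
      ((1 - ∑ i, s i) / b * log (1 - d * δ * √b / (1 - ∑ i, s i)) -
          (-(d * δ) / √b - (d * δ) ^ 2 / (2 * (1 - ∑ i, s i)))) +
        ∑ i, (s i / b * log (1 + δ * √b / s i) - (δ / √b - δ ^ 2 / (2 * s i))) := by
  have hsum : ∑ i, δ ^ 2 / (2 * s i) = δ ^ 2 / 2 * ∑ i, 1 / s i := by
    rw [mul_sum]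
    exact sum_congr rfl fun i _ => by ring
  rw [log_Qbd h0 hi, logQbdLimit, sum_sub_distrib, sum_sub_distrib, sum_const, card_univ,
    Fintype.card_fin, nsmul_eq_mul, hsum]
  ring

lemma one_quarter_le_one_sub_sum {d : ℕ} {s : Fin d → ℝ} (hs : ∀ i, s i ≤ 3 / (4 * d)) :
    1 / 4 ≤ 1 - ∑ i, s i := by
  have : ∑ i, s i ≤ 3 / 4 :=
    calc ∑ i, s i ≤ d * (3 / (4 * d)) := by
          simpa using sum_le_sum fun i (_ : i ∈ univ) => hs i
      _ = 3 / 4 * (d / d) := by ring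
      _ ≤ 3 / 4 := mul_le_of_le_one_right (by norm_num) (div_self_le_one _)
  linarith

lemma pos_and_one_le_four_mul {d : ℕ} (hd : 0 < d) {x : ℝ} (h : 1 / (4 * d) ≤ x) :
    0 < x ∧ 1 ≤ 4 * d * x := by
  have hd : (0 : ℝ) < 4 * d := mul_pos four_pos (Nat.cast_pos.2 hd)
  exact ⟨(one_div_pos.2 hd).trans_le h, (div_le_iff₀' hd).1 h⟩

lemma Qbd_eq_exp_logQbdLimit_add {d : ℕ} {b δ : ℝ} {s : Fin d → ℝ} (hb : 0 < b)
    (hbδ : 8 * d * |δ| * √b ≤ 1) (hs : ∀ i, 1 / (4 * d) ≤ s i)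
    (hA : 1 / 4 ≤ 1 - ∑ i, s i) :
    ∃ E, |E| ≤ 64 * d ^ 3 * |δ| ^ 3 * √b ∧
      Qbd d b δ s = exp (logQbdLimit d δ s + E) := by
  set r := √b
  set A := 1 - ∑ i, s i
  have hr : 0 < r := sqrt_pos.2 hb
  have hbr : b = r ^ 2 := (sq_sqrt hb.le).symm
  have hA4 : 1 ≤ 4 * 1 * A := by linarith
  have hdδ : 8 * 1 * |-(d * δ)| * r ≤ 1 := by
    rw [abs_neg, abs_mul, Nat.abs_cast]
    linarith
  have hds : ∀ i, 1 ≤ 4 * d * s i := fun i => (pos_and_one_le_four_mul i.pos (hs i)).2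
  have h0 : 0 < 1 - d * δ * r / A := by
    have := abs_mul_div_le_half zero_le_one hr.le hA4 hdδ
    rw [neg_mul, neg_div, abs_neg] at this
    linarith [le_abs_self (d * δ * r / A)]
  have hi : ∀ i, 0 < 1 + δ * r / s i := fun i => by
    linarith [neg_abs_le (δ * r / s i), abs_mul_div_le_half d.cast_nonneg hr.le (hds i) hbδ]
  have e0 := abs_mul_log_one_add_sub_le zero_le_one hr hA4 hdδ
  rw [show 1 + -(d * δ) * r / A = 1 - d * δ * r / A by ring, neg_sq, abs_neg, abs_mul,
    Nat.abs_cast, ← hbr] at e0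
  have ei := fun i => hbr ▸ abs_mul_log_one_add_sub_le d.cast_nonneg hr (hds i) hbδ
  refine ⟨log (Qbd d b δ s) - logQbdLimit d δ s, ?_,
    by rw [add_sub_cancel, exp_log (Qbd_pos h0 hi)]⟩
  rw [log_Qbd_sub_logQbdLimit h0 hi]
  calc _ ≤ |A / b * log (1 - d * δ * r / A) - (-(d * δ) / r - (d * δ) ^ 2 / (2 * A))| +
        ∑ i, |s i / b * log (1 + δ * r / s i) - (δ / r - δ ^ 2 / (2 * s i))| :=
        (abs_add_le _ _).trans (add_le_add_right (abs_sum_le_sum_abs _ _) _)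
    _ ≤ 32 * 1 ^ 2 * (d * |δ|) ^ 3 * r + ∑ _i : Fin d, 32 * d ^ 2 * |δ| ^ 3 * r :=
        add_le_add e0 (sum_le_sum fun i _ => ei i)
    _ = 64 * d ^ 3 * |δ| ^ 3 * r := by
        simp only [one_pow, mul_one, sum_const, card_univ, Fintype.card_fin, nsmul_eq_mul]
        ring

lemma neg_le_logQbdLimit {d : ℕ} {δ : ℝ} {s : Fin d → ℝ} (hs : ∀ i, 1 / (4 * d) ≤ s i)
    (hA : 1 / 4 ≤ 1 - ∑ i, s i) : -(4 * d ^ 2 * δ ^ 2) ≤ logQbdLimit d δ s := by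
  have hsum : ∑ i, 1 / s i ≤ 4 * d ^ 2 := by
    calc ∑ i, 1 / s i ≤ ∑ _i : Fin d, 4 * (d : ℝ) := sum_le_sum fun i _ => by
          obtain ⟨hsi, hdsi⟩ := pos_and_one_le_four_mul i.pos (hs i)
          rwa [div_le_iff₀ hsi]
      _ = 4 * d ^ 2 := by
          simp only [sum_const, card_univ, Fintype.card_fin, nsmul_eq_mul]
          ring
  have hlast : (d : ℝ) ^ 2 * δ ^ 2 / (2 * (1 - ∑ i, s i)) ≤ 2 * d ^ 2 * δ ^ 2 := by
    rw [div_le_iff₀ (by linarith)]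
    nlinarith [(by positivity : (0 : ℝ) ≤ d ^ 2 * δ ^ 2)]
  rw [logQbdLimit]
  nlinarith [sq_nonneg δ]

theorem Qbd_asymptotics_general (d : ℕ) (δ : ℝ) :
    ∃ C c b0 : ℝ, 0 < C ∧ 0 < c ∧ 0 < b0 ∧ ∀ b ∈ Set.Ioo (0 : ℝ) b0,
      ∀ s : Fin d → ℝ,
        (∀ i, s i ∈ Set.Icc (1 / (4 * (d : ℝ))) (3 / (4 * (d : ℝ)))) →
        |Real.log (Qbd d b δ s) -
            (-(δ ^ 2 / 2) * (∑ i, 1 / s i) -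
              (d : ℝ) ^ 2 * δ ^ 2 / (2 * (1 - ∑ i, s i)))| ≤ C * Real.sqrt b ∧
        c ≤ Qbd d b δ s := by
  set K : ℝ := 64 * d ^ 3 * |δ| ^ 3
  refine ⟨K + 1, exp (-(4 * d ^ 2 * δ ^ 2) - (K + 1)), (8 * d * |δ| + 1)⁻¹ ^ 2,
    by positivity, exp_pos _, by positivity, ?_⟩
  rintro b ⟨hb, hbb0⟩ s hs
  have hsqrt : √b * (8 * d * |δ| + 1) < 1 := by
    rw [← lt_div_iff₀ (by positivity), one_div]
    exact (sqrt_lt' (by positivity)).2 hbb0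
  have hbδ : 8 * d * |δ| * √b ≤ 1 := by nlinarith [sqrt_nonneg b]
  have hb1 : √b ≤ 1 := by nlinarith [sqrt_nonneg b, (by positivity : 0 ≤ 8 * d * |δ| * √b)]
  have hA := one_quarter_le_one_sub_sum fun i => (hs i).2
  obtain ⟨E, hE, hQ⟩ := Qbd_eq_exp_logQbdLimit_add hb hbδ (fun i => (hs i).1) hA
  have hE' : |E| ≤ (K + 1) * √b := hE.trans (by nlinarith [sqrt_nonneg b])
  refine ⟨by rwa [hQ, log_exp, ← logQbdLimit, add_sub_cancel_left], ?_⟩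
  rw [hQ, exp_le_exp]
  have : (K + 1) * √b ≤ K + 1 := mul_le_of_le_one_right (by positivity) hb1
  linarith [neg_le_logQbdLimit (δ := δ) (fun i => (hs i).1) hA, neg_abs_le E]

/-- uniformly for `s ∈ [1/(4d), 3/(4d)]^d` as `b → 0`,
`Q_{b,δ}(s) = exp{-(δ²/2) ∑ 1/s_i - d²δ²/(2(1-‖s‖₁)) + O(√b)}`; in particular `Q_{b,δ}`
is bounded below by a positive constant depending only on `d` and `δ`. -/
theorem Qbd_asymptotics (d : ℕ) (hd : 1 ≤ d) (δ : ℝ) (hδ : δ ∈ Set.Ioo (0 : ℝ) 3) :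
    ∃ C c b0 : ℝ, 0 < C ∧ 0 < c ∧ 0 < b0 ∧ ∀ b ∈ Set.Ioo (0 : ℝ) b0,
      ∀ s : Fin d → ℝ,
        (∀ i, s i ∈ Set.Icc (1 / (4 * (d : ℝ))) (3 / (4 * (d : ℝ)))) →
        |Real.log (Qbd d b δ s) -
            (-(δ ^ 2 / 2) * (∑ i, 1 / s i) -
              (d : ℝ) ^ 2 * δ ^ 2 / (2 * (1 - ∑ i, s i)))| ≤ C * Real.sqrt b ∧
        c ≤ Qbd d b δ s :=
  Qbd_asymptotics_general d δ
end
end
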